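/- arXiv:1404.6799 — 4 statements merged into one kernel-verified Lean document; each statement's English description precedes it below -/
import Mathlib

section
/- Let k,n ∈ ℕ with 4 ≤ k ≤ n−2, and let ℋ be a hierarchy over [n] all of whose clusters have cardinality at least 2 and at most n−k. Let a,a' ∈ [n] and J ∈ ℋ with a ∈ J and a' ∉ J. For a' ∈ ∪ℋ, let m_{a'} and M_{a'} denote the minimal and the maximal ℋ-cluster containing a'. Let X,X' ∈ ([n]−{a,a'} choose k−1) satisfy: (1) if a' ∈ ∪ℋ, then both X and X' contain an element b ∈ m_{a'}−{a'}, X contains an element c ∉ M_{a'}, and X' contains an element c' ∉ M_{a'}; (2) if a' ∉ ∪ℋ, then both X and X' contain an element d not belonging to the maximal ℋ-cluster containing J; (3) if there exists J̄ ∈ ℋ with a ∈ J̄ ⊊ J (take J̄ maximal among such clusters), then X' contains an element of J−J̄ and X'∩J̄=∅, while if no such J̄ exists, then X'∩J≠∅; (4) X∩J=∅, and if there exists J̃ ∈ ℋ with J ⊊ J̃ (take J̃ minimal among such clusters), then X contains an element of J̃−J. Then, in the free ℤ-module ⊕_{H∈ℋ} ℤH, J = Σ_{H∈ℋ, H∩({a}∪X)≠∅,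 H⊉{a}∪X} H − Σ_{H∈ℋ, H∩({a'}∪X)≠∅, H⊉{a'}∪X} H − Σ_{H∈ℋ, H∩({a}∪X')≠∅, H⊉{a}∪X'} H + Σ_{H∈ℋ, H∩({a'}∪X')≠∅, H⊉{a'}∪X'} H. -/
open scoped Classical
open Finset

noncomputable section

/-- The total weight of the minimal subtree of a tree `G` spanning the vertex set `A`:
the sum of the weights of those edges of `G` that lie on every walk between some pair
of vertices of `A` (in a tree, these are exactly the edges of the minimal subtree
containing `A`). -/
def treeWeight {V : Type} [Fintype V] (G : SimpleGraph V) (w : Sym2 V → ℝ)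
    (A : Finset V) : ℝ :=
  ∑ e ∈ (Finset.univ : Finset (Sym2 V)),
    if e ∈ G.edgeSet ∧ ∃ a ∈ A, ∃ b ∈ A, ∀ p : G.Walk a b, e ∈ p.edges then w e else 0

/-- A weighted finite tree whose set of leaves is (the image of) `α`. -/
structure WTree (α : Type) [Fintype α] : Type 1 where
  V : Type
  fintypeV : Fintype V
  G : SimpleGraph V
  isTree : G.IsTree
  w : Sym2 V → ℝ
  label : α → V
  label_inj : Function.Injective label
  leaf_iff : ∀ v : V, (G.neighborSet v).ncard = 1 ↔ v ∈ Set.range label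

attribute [instance] WTree.fintypeV

namespace WTree

variable {α : Type} [Fintype α]

/-- The `k`-weight `D_I` : the weight of the minimal subtree containing the leaves
labelled by `I`. -/
def D (T : WTree α) (I : Finset α) : ℝ := treeWeight T.G T.w (I.image T.label)

/-- A node is a vertex of degree `> 2`. -/
def IsNode (T : WTree α) (v : T.V) : Prop := 2 < (T.G.neighborSet v).ncard

/-- Two vertices are neighbours if the path between them contains exactly one node. -/
def Neighbours (T : WTree α) (a b : T.V) : Prop :=
  a ≠ b ∧ ∃ p : T.G.Walk a b, p.IsPath ∧
    (p.support.toFinset.filter (fun v => T.IsNode v)).card = 1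

/-- Two leaves (given by their labels) are neighbours. -/
def LeafNbr (T : WTree α) (i j : α) : Prop := T.Neighbours (T.label i) (T.label j)

/-- A set of leaves is a cherry if any two of its elements are neighbours. -/
def IsCherry (T : WTree α) (C : Finset α) : Prop :=
  ∀ i ∈ C, ∀ j ∈ C, i ≠ j → T.LeafNbr i j

/-- A cherry is complete if it is not strictly contained in another cherry. -/
def IsCompleteCherry (T : WTree α) (C : Finset α) : Prop :=
  T.IsCherry C ∧ ∀ C' : Finset α, T.IsCherry C' → ¬ C ⊂ C'

/-- Buneman's index `⟨i,j|l,m⟩` : in the subtree spanned by the four leaves, `i,j` are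
neighbours, `l,m` are neighbours and `i,l` are not neighbours; equivalently, the path
from `i` to `j` is disjoint from the path from `l` to `m`. -/
def Buneman (T : WTree α) (i j l m : α) : Prop :=
  i ≠ j ∧ l ≠ m ∧
  ∃ (p : T.G.Walk (T.label i) (T.label j)) (q : T.G.Walk (T.label l) (T.label m)),
    p.IsPath ∧ q.IsPath ∧ ∀ v, v ∈ p.support → v ∉ q.support

/-- The edge `e` lies on the (unique) path between `a` and `b`. -/
def edgeBetween (T : WTree α) (a b : T.V) (e : Sym2 T.V) : Prop :=
  ∀ p : T.G.Walk a b, e ∈ p.edges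

/-- The set of leaf labels lying on the `u`-side of the edge `{u,v}`. -/
def sideLeaves (T : WTree α) (u v : T.V) : Finset α :=
  Finset.univ.filter fun i => T.edgeBetween (T.label i) v s(u, v)

/-- A pseudostar of kind `(n,k)` (with `n = #α`): every edge divides the set of leaves
into two sets such that at least one of them has cardinality `≥ k`. -/
def IsPseudostar (T : WTree α) (k : ℕ) : Prop :=
  ∀ u v : T.V, T.G.Adj u v →
    k ≤ (T.sideLeaves u v).card ∨ k ≤ (T.sideLeaves v u).card

/-- A tree is essential if it has no vertices of degree 2. -/
def IsEssential (T : WTree α) : Prop := ∀ v : T.V, (T.G.neighborSet v).ncard ≠ 2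

/-- The edge `e` lies on the twig of the leaf labelled `i`, i.e. on the path from that
leaf to the nearest node (equivalently, on the path from the leaf to every node). -/
def OnTwig (T : WTree α) (i : α) (e : Sym2 T.V) : Prop :=
  ∀ w : T.V, T.IsNode w → T.edgeBetween (T.label i) w e

/-- An edge is internal if it is an edge of the tree lying on no twig. -/
def IsInternalEdge (T : WTree α) (e : Sym2 T.V) : Prop :=
  e ∈ T.G.edgeSet ∧ ∀ i : α, ¬ T.OnTwig i e

/-- All internal edges have nonzero weight. -/
def InternalNonzero (T : WTree α) : Prop := ∀ e, T.IsInternalEdge e → T.w e ≠ 0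

/-- All edges have positive weight. -/
def PositiveWeighted (T : WTree α) : Prop := ∀ e ∈ T.G.edgeSet, 0 < T.w e

/-- All weights are nonnegative and all internal edges have positive weight. -/
def NNIPWeighted (T : WTree α) : Prop :=
  (∀ e ∈ T.G.edgeSet, 0 ≤ T.w e) ∧ ∀ e, T.IsInternalEdge e → 0 < T.w e

/-- The edge `e` belongs to the minimal subtree containing the leaves labelled by `I`. -/
def inMinSubtree (T : WTree α) (I : Finset α) (e : Sym2 T.V) : Prop :=
  e ∈ T.G.edgeSet ∧ ∃ a ∈ I, ∃ b ∈ I, T.edgeBetween (T.label a) (T.label b) e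

end WTree

/-- Isomorphism of weighted trees fixing the labelled leaves. -/
def WIso {α : Type} [Fintype α] (T T' : WTree α) : Prop :=
  ∃ φ : T.V ≃ T'.V,
    (∀ a b : T.V, T.G.Adj a b ↔ T'.G.Adj (φ a) (φ b)) ∧
    (∀ a b : T.V, T.G.Adj a b → T.w s(a, b) = T'.w s(φ a, φ b)) ∧
    ∀ i : α, φ (T.label i) = T'.label i

/-- A family indexed by the `k`-subsets of `α` is l-treelike if it is realized by a
weighted tree with leaf set `α`. -/
def IsLTreelike (α : Type) [Fintype α] (k : ℕ) (D : Finset α → ℝ) : Prop :=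
  ∃ T : WTree α, ∀ I : Finset α, I.card = k → T.D I = D I

/-- p-l-treelike : realized by a positive-weighted tree with leaf set `α`. -/
def IsPLTreelike (α : Type) [Fintype α] (k : ℕ) (D : Finset α → ℝ) : Prop :=
  ∃ T : WTree α, T.PositiveWeighted ∧ ∀ I : Finset α, I.card = k → T.D I = D I

/-- nn-ip-l-treelike : realized by a nonnegative-weighted, internal-positive-weighted
tree with leaf set `α`. -/
def IsNNIPLTreelike (α : Type) [Fintype α] (k : ℕ) (D : Finset α → ℝ) : Prop :=
  ∃ T : WTree α, T.NNIPWeighted ∧ ∀ I : Finset α, I.card = k → T.D I = D I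

/-- p-treelike : realized on a subset of the vertices of a positive-weighted tree. -/
def IsPTreelike (n k : ℕ) (D : Finset (Fin n) → ℝ) : Prop :=
  ∃ (V : Type) (_ : Fintype V) (G : SimpleGraph V) (w : Sym2 V → ℝ) (f : Fin n → V),
    G.IsTree ∧ Function.Injective f ∧ (∀ e ∈ G.edgeSet, 0 < w e) ∧
    ∀ I : Finset (Fin n), I.card = k → treeWeight G w (I.image f) = D I


/-- A hierarchy: a set system in which any two members intersect in `∅` or in one
of the two. -/
def IsHierarchy {β : Type} (ℋ : Set (Finset β)) : Prop :=
  ∀ H ∈ ℋ, ∀ H' ∈ ℋ, H ∩ H' = ∅ ∨ H ∩ H' = H ∨ H ∩ H' = H'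

/-- The element `Σ_{H ∈ ℋ, H ∩ A ≠ ∅, H ⊉ A} H` of the free ℤ-module on the clusters. -/
def hsum {β : Type} (ℋ : Set (Finset β)) (A : Finset β) : Finset β →₀ ℤ :=
  ∑ᶠ H ∈ {H : Finset β | H ∈ ℋ ∧ (H ∩ A).Nonempty ∧ ¬ A ⊆ H}, Finsupp.single H 1

/-- `m` is a minimal cluster of `ℋ` containing `t`. -/
def IsMinCluster {β : Type} (ℋ : Set (Finset β)) (t : β) (m : Finset β) : Prop :=
  m ∈ ℋ ∧ t ∈ m ∧ ∀ H ∈ ℋ, t ∈ H → ¬ H ⊂ m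

/-- `M` is a maximal cluster of `ℋ` containing `t`. -/
def IsMaxCluster {β : Type} (ℋ : Set (Finset β)) (t : β) (M : Finset β) : Prop :=
  M ∈ ℋ ∧ t ∈ M ∧ ∀ H ∈ ℋ, t ∈ H → ¬ M ⊂ H

/-- `M` is a maximal cluster of `ℋ` containing the cluster `J`. -/
def IsMaxClusterContaining {β : Type} (ℋ : Set (Finset β)) (J M : Finset β) : Prop :=
  M ∈ ℋ ∧ J ⊆ M ∧ ∀ H ∈ ℋ, J ⊆ H → ¬ M ⊂ H

section FamHierarchy

variable (n k : ℕ) (D : Finset (Fin n) → ℝ)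

/-- `𝒞⁰` : the sets `Z` of cardinality `≥ 2` such that for all `i,j ∈ Z` the quantity
`D_{i,X} - D_{j,X}` does not depend on `X ∈ ([n] - {i,j} choose k-1)`. -/
def famC0 : Set (Finset (Fin n)) :=
  {Z | 2 ≤ Z.card ∧ ∀ i ∈ Z, ∀ j ∈ Z, ∀ X X' : Finset (Fin n),
    X.card = k - 1 → i ∉ X → j ∉ X → X'.card = k - 1 → i ∉ X' → j ∉ X' →
    D (insert i X) - D (insert j X) = D (insert i X') - D (insert j X')}

/-- `𝒞̲⁰` : the maximal elements of `𝒞⁰`. -/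
def famMaxC0 : Set (Finset (Fin n)) :=
  {Z | Z ∈ famC0 n k D ∧ ∀ Z' ∈ famC0 n k D, ¬ Z ⊂ Z'}

/-- Condition (b) in the definition of `𝒢^s` : there are `R, S` in
`([n]-{i,j,x,y} choose k-2)` with `D_{ijR} + D_{xyR} ≠ D_{ixR} + D_{jyR}` and
`D_{ijS} + D_{xyS} ≠ D_{iyS} + D_{jxS}`. -/
def famCondB (i j x y : Fin n) : Prop :=
  ∃ R S : Finset (Fin n),
    R.card = k - 2 ∧ i ∉ R ∧ j ∉ R ∧ x ∉ R ∧ y ∉ R ∧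
    S.card = k - 2 ∧ i ∉ S ∧ j ∉ S ∧ x ∉ S ∧ y ∉ S ∧
    D (insert i (insert j R)) + D (insert x (insert y R)) ≠
      D (insert i (insert x R)) + D (insert j (insert y R)) ∧
    D (insert i (insert j S)) + D (insert x (insert y S)) ≠
      D (insert i (insert y S)) + D (insert j (insert x S))

/-- Condition (b) in the definition of `𝒞^s` (with the roles of the pairs permuted). -/
def famCondB' (i j x y : Fin n) : Prop :=
  ∃ R S : Finset (Fin n),
    R.card = k - 2 ∧ i ∉ R ∧ j ∉ R ∧ x ∉ R ∧ y ∉ R ∧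
    S.card = k - 2 ∧ i ∉ S ∧ j ∉ S ∧ x ∉ S ∧ y ∉ S ∧
    D (insert i (insert x R)) + D (insert j (insert y R)) ≠
      D (insert i (insert j R)) + D (insert x (insert y R)) ∧
    D (insert i (insert x S)) + D (insert j (insert y S)) ≠
      D (insert i (insert y S)) + D (insert j (insert x S))

/-- `𝒢⁰`. -/
def famG0 : Set (Finset (Fin n)) :=
  {Z | Z ∈ famMaxC0 n k D ∧ Z.card ≤ n - k ∧
    ∀ i ∈ Z, ∀ j ∈ Z, ∀ x y : Fin n, x ∉ Z → y ∉ Z →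
      (({i, j} : Finset (Fin n)) ∈ famMaxC0 n k D ∧
        ({x, y} : Finset (Fin n)) ∈ famMaxC0 n k D) ∨
      famCondB n k D i j x y}

/-- `𝒞^s`, relative to the surviving set `N = [n]^s`. -/
def famCs (N : Finset (Fin n)) : Set (Finset (Fin n)) :=
  {Z | Z ⊆ N ∧ 2 ≤ Z.card ∧ ∀ i ∈ Z, ∀ j ∈ Z, ∀ x y : Fin n,
    x ∈ N → y ∈ N → x ≠ i → x ≠ j → y ≠ i → y ≠ j →
    ¬ (({i, x} : Finset (Fin n)) ∈ famMaxC0 n k D ∧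
        ({j, y} : Finset (Fin n)) ∈ famMaxC0 n k D) ∧
    ¬ famCondB' n k D i j x y}

/-- `𝒞̲^s` : the maximal elements of `𝒞^s`. -/
def famMaxCs (N : Finset (Fin n)) : Set (Finset (Fin n)) :=
  {Z | Z ∈ famCs n k D N ∧ ∀ Z' ∈ famCs n k D N, ¬ Z ⊂ Z'}

/-- The chain relation expressing that `y0` descends from `y` through the history
`hs = [𝒢⁰, …, 𝒢^{s-1}]` of pruned families. -/
def descChain : List (Set (Finset (Fin n))) → Fin n → Fin n → Prop
  | [], y0, y => y0 = y
  | G :: rest, y0, y =>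
      ∃ y1 : Fin n, (y1 = y0 ∨ ∃ Z ∈ G, y0 ∈ Z ∧ y1 ∈ Z) ∧ descChain rest y1 y

/-- `∂Z` : the set of elements of `[n]` descending from an element of `Z`. -/
def bdry (hs : List (Set (Finset (Fin n)))) (Z : Finset (Fin n)) : Finset (Fin n) :=
  Finset.univ.filter fun y0 => ∃ ys ∈ Z, descChain n hs y0 ys

/-- `𝒢^s` (for `s ≥ 1`), relative to the surviving set `N = [n]^s` and the history `hs`. -/
def famGs (N : Finset (Fin n)) (hs : List (Set (Finset (Fin n)))) :
    Set (Finset (Fin n)) :=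
  {Z | Z ∈ famMaxCs n k D N ∧ (bdry n hs Z).card ≤ n - k ∧
    ∀ i ∈ Z, ∀ j ∈ Z, ∀ x y : Fin n, x ∉ Z → y ∉ Z →
      (({i, j} : Finset (Fin n)) ∈ famMaxC0 n k D ∧
        ({x, y} : Finset (Fin n)) ∈ famMaxC0 n k D) ∨
      famCondB n k D i j x y}

/-- The pair `([n]^s, [𝒢⁰, …, 𝒢^{s-1}])`. -/
def famStage : ℕ → Finset (Fin n) × List (Set (Finset (Fin n)))
  | 0 => (Finset.univ, [])
  | s + 1 =>
      let p := famStage s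
      let G := if s = 0 then famG0 n k D else famGs n k D p.1 p.2
      (p.1.filter fun y => ∀ Z ∈ G, y ∈ Z → ∀ z ∈ Z, y ≤ z, p.2 ++ [G])

/-- `𝒢^s`. -/
def famGAt (s : ℕ) : Set (Finset (Fin n)) :=
  if s = 0 then famG0 n k D
  else famGs n k D (famStage n k D s).1 (famStage n k D s).2

/-- The hierarchy over `[n]` associated to the family `{D_I}`. -/
def famHier : Set (Finset (Fin n)) :=
  {A | ∃ s : ℕ, ∃ Z ∈ famGAt n k D s, A = bdry n (famStage n k D s).2 Z}

/-- Condition (i): if `ℋ` covers `[n]` then the number of maximal clusters is not 2. -/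
def CondI {n : ℕ} (ℋ : Set (Finset (Fin n))) : Prop :=
  (∀ x : Fin n, ∃ H ∈ ℋ, x ∈ H) →
    {H | H ∈ ℋ ∧ ∀ H' ∈ ℋ, ¬ H ⊂ H'}.ncard ≠ 2

/-- Condition (ii): for `q ∈ {1,…,n-1}`, `s ∈ {1, k-1}`, `W, W' ∈ ([n] choose s)`,
the sum `Σ_i (D_{W Z_i} - D_{W' Z_i})` takes the same value on all choices of the
`Z_i ∈ ([n]-W-W' choose k-s)` on which the corresponding element of the free
ℤ-module `⊕_{H ∈ ℋ} ℤ H` is the same. -/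
def CondII (n k : ℕ) (D : Finset (Fin n) → ℝ) (ℋ : Set (Finset (Fin n))) : Prop :=
  ∀ q : ℕ, 1 ≤ q → q ≤ n - 1 → ∀ s : ℕ, s = 1 ∨ s = k - 1 →
    ∀ W W' : Finset (Fin n), W.card = s → W'.card = s →
    ∀ Z Z' : ℕ → Finset (Fin n),
      (∀ i < q, (Z i).card = k - s ∧ Disjoint (Z i) W ∧ Disjoint (Z i) W') →
      (∀ i < q, (Z' i).card = k - s ∧ Disjoint (Z' i) W ∧ Disjoint (Z' i) W') →
      (∑ i ∈ Finset.range q, (hsum ℋ (W ∪ Z i) - hsum ℋ (W' ∪ Z i)) =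
        ∑ i ∈ Finset.range q, (hsum ℋ (W ∪ Z' i) - hsum ℋ (W' ∪ Z' i))) →
      (∑ i ∈ Finset.range q, (D (W ∪ Z i) - D (W' ∪ Z i)) =
        ∑ i ∈ Finset.range q, (D (W ∪ Z' i) - D (W' ∪ Z' i)))

end FamHierarchy

section Pruning

namespace WTree

variable {α : Type} [Fintype α]

/-- The subtree of `T` induced on the vertex set `S` (as a graph on the ambient
vertex set). Pruning a cherry, i.e. contracting the twigs of its leaves, is realized
by deleting the vertices of those twigs except the stalk. -/
def restrictG (T : WTree α) (S : Set T.V) : SimpleGraph T.V where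
  Adj a b := T.G.Adj a b ∧ a ∈ S ∧ b ∈ S
  symm := ⟨fun _ _ h => ⟨h.1.symm, h.2.2, h.2.1⟩⟩
  loopless := ⟨fun a h => T.G.loopless.irrefl a h.1⟩

/-- Degree in the pruned tree. -/
def rdeg (T : WTree α) (S : Set T.V) (v : T.V) : ℕ :=
  ((T.restrictG S).neighborSet v).ncard

/-- Leaf of the pruned tree. -/
def rleaf (T : WTree α) (S : Set T.V) (v : T.V) : Prop := v ∈ S ∧ T.rdeg S v = 1

/-- Node (vertex of degree `> 2`) of the pruned tree. -/
def rnode (T : WTree α) (S : Set T.V) (v : T.V) : Prop := v ∈ S ∧ 2 < T.rdeg S v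

/-- Neighbours in the pruned tree: the path between them contains exactly one node. -/
def rnbr (T : WTree α) (S : Set T.V) (a b : T.V) : Prop :=
  a ≠ b ∧ ∃ p : (T.restrictG S).Walk a b, p.IsPath ∧
    (p.support.toFinset.filter (fun v => T.rnode S v)).card = 1

/-- Cherry of the pruned tree: a set of leaves any two of which are neighbours. -/
def rCherry (T : WTree α) (S : Set T.V) (C : Set T.V) : Prop :=
  (∀ v ∈ C, T.rleaf S v) ∧ ∀ a ∈ C, ∀ b ∈ C, a ≠ b → T.rnbr S a b

/-- Complete cherry of the pruned tree. -/
def rCompleteCherry (T : WTree α) (S : Set T.V) (C : Set T.V) : Prop :=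
  T.rCherry S C ∧ ∀ C' : Set T.V, T.rCherry S C' → ¬ C ⊂ C'

/-- The stalk of a cherry: the node lying on the path from any element of the cherry
to any node. -/
def rStalk (T : WTree α) (S : Set T.V) (C : Set T.V) (v : T.V) : Prop :=
  T.rnode S v ∧ ∀ a ∈ C, ∀ w : T.V, T.rnode S w →
    ∀ p : (T.restrictG S).Walk a w, p.IsPath → v ∈ p.support

/-- `v` is on the twig of the leaf `ℓ` in the pruned tree: `v` is not a node and lies
on the path from `ℓ` to every node. -/
def rTwigVert (T : WTree α) (S : Set T.V) (ℓ v : T.V) : Prop :=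
  v ∈ S ∧ ¬ T.rnode S v ∧ ∀ w : T.V, T.rnode S w →
    ∀ p : (T.restrictG S).Walk ℓ w, p.IsPath → v ∈ p.support

/-- The vertex set obtained by pruning the cherry `C` (contracting the twigs of its
leaves). -/
def pruneCherry (T : WTree α) (S : Set T.V) (C : Set T.V) : Set T.V :=
  S \ {v | ∃ ℓ ∈ C, T.rTwigVert S ℓ v}

/-- A good cherry: a complete cherry whose stalk is a leaf of the tree obtained by
pruning it. -/
def rGoodCherry (T : WTree α) (S : Set T.V) (C : Set T.V) : Prop :=
  T.rCompleteCherry S C ∧ ∃ v : T.V, T.rStalk S C v ∧ T.rleaf (T.pruneCherry S C) v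

/-- The leaf labelled `x` (of the original tree) descends from the leaf `y` of the
pruned tree: the path in the original tree from `x` to `y` contains no leaf of the
pruned tree other than `y`. -/
def descLeaf (T : WTree α) (S : Set T.V) (x : α) (y : T.V) : Prop :=
  T.rleaf S y ∧ ∀ p : T.G.Walk (T.label x) y, p.IsPath →
    ∀ v ∈ p.support, T.rleaf S v → v = y

/-- `∂C` : the set of labels descending from an element of `C`. -/
def bdryV (T : WTree α) (S : Set T.V) (C : Set T.V) : Finset α :=
  Finset.univ.filter fun x => ∃ y ∈ C, T.descLeaf S x y

/-- One pruning step: prune all good cherries `C` with `#∂C ≤ r`. -/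
def pruneStage (T : WTree α) (r : ℕ) (S : Set T.V) : Set T.V :=
  S \ {v | ∃ C : Set T.V, T.rGoodCherry S C ∧ (T.bdryV S C).card ≤ r ∧
    ∃ ℓ ∈ C, T.rTwigVert S ℓ v}

/-- The vertex set of `P^s`. -/
def stageSet (T : WTree α) (r : ℕ) : ℕ → Set T.V
  | 0 => Set.univ
  | s + 1 => T.pruneStage r (T.stageSet r s)

/-- The hierarchy associated to the pseudostar `T` (with `r = n - k`): the sets `∂C`
for `C` a good cherry of some `P^s` with `#∂C ≤ r`; when `L(P^s)` is the union of two
complete cherries both with `#∂C_i ≤ r`, only the one whose `∂` contains the minimum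
of `∂C₁ ∪ ∂C₂` is included. -/
def psHier [LinearOrder α] (T : WTree α) (r : ℕ) : Set (Finset α) :=
  {A | ∃ (s : ℕ) (C : Set T.V),
    T.rGoodCherry (T.stageSet r s) C ∧
    (T.bdryV (T.stageSet r s) C).card ≤ r ∧
    A = T.bdryV (T.stageSet r s) C ∧
    ∀ C₂ : Set T.V, T.rCompleteCherry (T.stageSet r s) C₂ →
      (∀ v : T.V, T.rleaf (T.stageSet r s) v ↔ v ∈ C ∪ C₂) →
      (T.bdryV (T.stageSet r s) C₂).card ≤ r →
      ∃ m ∈ T.bdryV (T.stageSet r s) C,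
        ∀ x ∈ T.bdryV (T.stageSet r s) C ∪ T.bdryV (T.stageSet r s) C₂, m ≤ x}

/-- The edge `e` belongs to the twig of the leaf `v` in the pruned tree on `S`. -/
def rOnTwigEdge (T : WTree α) (S : Set T.V) (v : T.V) (e : Sym2 T.V) : Prop :=
  e ∈ (T.restrictG S).edgeSet ∧ ∀ w : T.V, T.rnode S w →
    ∀ p : (T.restrictG S).Walk v w, p.IsPath → e ∈ p.edges

end WTree

end Pruning

/-! Compare coefficients at a cluster `K`. The coefficient of `K` in
`Σ_{H ∩ ({t} ∪ S) ≠ ∅, H ⊉ {t} ∪ S} H` is `[S ⊄ K]` when `t ∈ K` and `[K ∩ S ≠ ∅]` when `t ∉ K`,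
so clusters containing both or neither of `a, a'` contribute `0`. A cluster through `a'` but not
`a` lies between the minimal and the maximal cluster through `a'`, so by (1) it meets both `X`
and `X'` and contains neither, and again contributes `0`. A cluster `K` through `a` but not `a'`
is comparable with `J`: for `K = J`, `J ⊊ K` and `K ⊊ J` conditions (1)–(4) give the coefficients
`1 - 0 - 1 + 1`, `1 - 1 - 1 + 1` and `1 - 0 - 1 + 0`. -/

section Hierarchy

variable {β : Type} {ℋ : Set (Finset β)}

theorem exists_isMinCluster {t : β} {K : Finset β} (hK : K ∈ ℋ) (ht : t ∈ K) :
    ∃ m, IsMinCluster ℋ t m := by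
  obtain ⟨m, ⟨hm, htm⟩, hmin⟩ := wellFounded_lt.has_min {H | H ∈ ℋ ∧ t ∈ H} ⟨K, hK, ht⟩
  exact ⟨m, hm, htm, fun H hH htH => hmin H ⟨hH, htH⟩⟩

theorem exists_isMaxCluster (hℋ : ℋ.Finite) {t : β} {K : Finset β} (hK : K ∈ ℋ) (ht : t ∈ K) :
    ∃ M, IsMaxCluster ℋ t M := by
  obtain ⟨M, hM⟩ := (hℋ.subset fun H (h : H ∈ ℋ ∧ t ∈ H) => h.1).exists_maximal ⟨K, hK, ht⟩
  exact ⟨M, hM.prop.1, hM.prop.2, fun H hH htH => hM.not_gt ⟨hH, htH⟩⟩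

theorem exists_isMaxClusterContaining (hℋ : ℋ.Finite) {J : Finset β} (hJ : J ∈ ℋ) :
    ∃ M, IsMaxClusterContaining ℋ J M := by
  obtain ⟨M, hM⟩ := (hℋ.subset fun H (h : H ∈ ℋ ∧ J ⊆ H) => h.1).exists_maximal ⟨J, hJ, le_rfl⟩
  exact ⟨M, hM.prop.1, hM.prop.2, fun H hH hJH => hM.not_gt ⟨hH, hJH⟩⟩

variable [DecidableEq β]

theorem IsHierarchy.subset_or_subset (hH : IsHierarchy ℋ) {H K : Finset β} (hH' : H ∈ ℋ)
    (hK : K ∈ ℋ) (hHK : (H ∩ K).Nonempty) : H ⊆ K ∨ K ⊆ H := by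
  -- `IsHierarchy` is stated with the classical `∩`.
  have hHK' : H ∩ K = ∅ ∨ H ∩ K = H ∨ H ∩ K = K := by convert hH H hH' K hK
  rcases hHK' with h | h | h
  · simp [h] at hHK
  · exact Or.inl (inter_eq_left.mp h)
  · exact Or.inr (inter_eq_right.mp h)

theorem IsHierarchy.subset_of_not_ssubset (hH : IsHierarchy ℋ) {H K : Finset β} (hH' : H ∈ ℋ)
    (hK : K ∈ ℋ) (hHK : (H ∩ K).Nonempty) (h : ¬ K ⊂ H) : H ⊆ K :=
  (hH.subset_or_subset hH' hK hHK).elim id fun hKH => (hKH.eq_of_not_ssubset h).ge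

theorem IsMinCluster.subset_of_mem (hH : IsHierarchy ℋ) {t : β} {m K : Finset β}
    (hm : IsMinCluster ℋ t m) (hK : K ∈ ℋ) (ht : t ∈ K) : m ⊆ K :=
  hH.subset_of_not_ssubset hm.1 hK ⟨t, mem_inter.2 ⟨hm.2.1, ht⟩⟩ (hm.2.2 K hK ht)

theorem IsMaxCluster.subset_of_mem (hH : IsHierarchy ℋ) {t : β} {M K : Finset β}
    (hM : IsMaxCluster ℋ t M) (hK : K ∈ ℋ) (ht : t ∈ K) : K ⊆ M :=
  hH.subset_of_not_ssubset hK hM.1 ⟨t, mem_inter.2 ⟨ht, hM.2.1⟩⟩ (hM.2.2 K hK ht)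

theorem IsMaxCluster.subset_of_inter_nonempty (hH : IsHierarchy ℋ) {t : β} {m M K : Finset β}
    (hM : IsMaxCluster ℋ t M) (hm : m ∈ ℋ) (htm : t ∈ m) (hK : K ∈ ℋ)
    (hKm : (K ∩ m).Nonempty) : K ⊆ M := by
  rcases hH.subset_or_subset hK hm hKm with hKm | hmK
  · exact hKm.trans (hM.subset_of_mem hH hm htm)
  · exact hM.subset_of_mem hH hK (hmK htm)

theorem IsMaxClusterContaining.subset_of_subset (hH : IsHierarchy ℋ) {J M K : Finset β}
    (hM : IsMaxClusterContaining ℋ J M) (hJ : J.Nonempty) (hK : K ∈ ℋ) (hJK : J ⊆ K) :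
    K ⊆ M :=
  hH.subset_of_not_ssubset hK hM.1 (hJ.mono (subset_inter hJK hM.2.1)) (hM.2.2 K hK hJK)

theorem hsum_apply (hℋ : ℋ.Finite) (A K : Finset β) :
    hsum ℋ A K = if K ∈ ℋ ∧ (K ∩ A).Nonempty ∧ ¬ A ⊆ K then 1 else 0 := by
  rw [hsum, finsum_mem_eq_finite_toFinset_sum _ (hℋ.subset fun H h => h.1),
    Finsupp.finsetSum_apply]
  simp only [Finsupp.single_apply, sum_ite_eq', Set.Finite.mem_toFinset, Set.mem_ofPred_eq]
  -- `hsum` is stated with the classical `∩`.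
  congr!

theorem hsum_insert_apply_of_mem (hℋ : ℋ.Finite) {t : β} {K : Finset β} (hK : K ∈ ℋ)
    (ht : t ∈ K) (S : Finset β) : hsum ℋ (insert t S) K = if S ⊆ K then 0 else 1 := by
  simp [hsum_apply hℋ, hK, insert_subset_iff, ht]

theorem hsum_insert_apply_of_notMem (hℋ : ℋ.Finite) {t : β} {K : Finset β} (hK : K ∈ ℋ)
    (ht : t ∉ K) (S : Finset β) :
    hsum ℋ (insert t S) K = if (K ∩ S).Nonempty then 1 else 0 := by
  simp [hsum_apply hℋ, hK, insert_subset_iff, ht, inter_insert_of_notMem ht]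

theorem single_eq_alternating_hsum (hH : IsHierarchy ℋ) (hℋ : ℋ.Finite) {a a' : β}
    {J X X' : Finset β} (hJ : J ∈ ℋ) (haJ : a ∈ J) (ha'J : a' ∉ J)
    (h_meets : ∀ K ∈ ℋ, a' ∈ K → (K ∩ X).Nonempty ∧ (K ∩ X').Nonempty)
    (h_not_subset : ∀ K ∈ ℋ, a' ∈ K ∨ J ⊆ K → ¬ X ⊆ K ∧ ¬ X' ⊆ K)
    (hJX : Disjoint J X) (hJX' : (J ∩ X').Nonempty)
    (h_above : ∀ K ∈ ℋ, J ⊂ K → (K ∩ X).Nonempty)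
    (h_below : ∀ K ∈ ℋ, a ∈ K → K ⊂ J → Disjoint K X') :
    (Finsupp.single J 1 : Finset β →₀ ℤ) =
      hsum ℋ (insert a X) - hsum ℋ (insert a' X)
        - hsum ℋ (insert a X') + hsum ℋ (insert a' X') := by
  ext K
  simp only [Finsupp.coe_add, Finsupp.coe_sub, Pi.add_apply, Pi.sub_apply]
  by_cases hK : K ∈ ℋ
  swap
  · have hJK : J ≠ K := by rintro rfl; exact hK hJ
    simp [hsum_apply hℋ, hK, hJK]
  by_cases haK : a ∈ K <;> by_cases ha'K : a' ∈ K
  · have hJK : J ≠ K := by rintro rfl; exact ha'J ha'K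
    simp [hsum_insert_apply_of_mem hℋ hK, haK, ha'K, hJK]
  · simp only [hsum_insert_apply_of_mem hℋ hK haK, hsum_insert_apply_of_notMem hℋ hK ha'K]
    obtain rfl | hJK := eq_or_ne J K
    · obtain ⟨hXJ, hX'J⟩ := h_not_subset J hJ (Or.inr subset_rfl)
      simp [hXJ, hX'J, hJX', disjoint_iff_inter_eq_empty.mp hJX]
    rcases hH.subset_or_subset hJ hK ⟨a, mem_inter.2 ⟨haJ, haK⟩⟩ with hJsubK | hKsubJ
    · have hJK' : J ⊂ K := hJsubK.ssubset_of_ne hJK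
      obtain ⟨hXK, hX'K⟩ := h_not_subset K hK (Or.inr hJsubK)
      simp [hJK, hXK, hX'K, h_above K hK hJK', hJX'.mono (inter_subset_inter_right hJsubK)]
    · have hKJ : K ⊂ J := hKsubJ.ssubset_of_ne hJK.symm
      obtain ⟨hXJ, -⟩ := h_not_subset J hJ (Or.inr subset_rfl)
      obtain ⟨x', hx'⟩ := hJX'
      have hKX' := h_below K hK haK hKJ
      have hX'K : ¬ X' ⊆ K := fun h =>
        disjoint_left.mp hKX' (h (mem_inter.1 hx').2) (mem_inter.1 hx').2
      have hXK : ¬ X ⊆ K := fun h => hXJ (h.trans hKsubJ)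
      simp [hJK, hXK, hX'K, disjoint_iff_inter_eq_empty.mp hKX',
        disjoint_iff_inter_eq_empty.mp (hJX.mono_left hKsubJ)]
  · obtain ⟨hKX, hKX'⟩ := h_meets K hK ha'K
    obtain ⟨hXK, hX'K⟩ := h_not_subset K hK (Or.inl ha'K)
    have hJK : J ≠ K := by rintro rfl; exact haK haJ
    simp [hsum_insert_apply_of_mem hℋ hK ha'K, hsum_insert_apply_of_notMem hℋ hK haK, hJK,
      hKX, hKX', hXK, hX'K]
  · have hJK : J ≠ K := by rintro rfl; exact haK haJ
    simp [hsum_insert_apply_of_notMem hℋ hK, haK, ha'K, hJK]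

theorem inter_nonempty_of_minCluster_meets (hH : IsHierarchy ℋ) (hℋ : ℋ.Finite)
    {a' : β} {X X' K : Finset β}
    (hyp1 : ∀ ma' Ma' : Finset β,
      IsMinCluster ℋ a' ma' → IsMaxCluster ℋ a' Ma' →
      (∃ b, b ∈ ma' ∧ b ≠ a' ∧ b ∈ X ∧ b ∈ X') ∧
      (∃ c ∈ X, c ∉ Ma') ∧ (∃ c' ∈ X', c' ∉ Ma'))
    (hK : K ∈ ℋ) (ha'K : a' ∈ K) : (K ∩ X).Nonempty ∧ (K ∩ X').Nonempty := by
  obtain ⟨m, hm⟩ := exists_isMinCluster hK ha'K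
  obtain ⟨M, hM⟩ := exists_isMaxCluster hℋ hK ha'K
  obtain ⟨⟨b, hbm, -, hbX, hbX'⟩, -⟩ := hyp1 m M hm hM
  have hbK := hm.subset_of_mem hH hK ha'K hbm
  exact ⟨⟨b, mem_inter.2 ⟨hbK, hbX⟩⟩, ⟨b, mem_inter.2 ⟨hbK, hbX'⟩⟩⟩

theorem not_subset_of_minCluster_meets_of_maxCluster_misses (hH : IsHierarchy ℋ)
    (hℋ : ℋ.Finite) {a' : β} {X X' H K : Finset β}
    (hyp1 : ∀ ma' Ma' : Finset β,
      IsMinCluster ℋ a' ma' → IsMaxCluster ℋ a' Ma' →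
      (∃ b, b ∈ ma' ∧ b ≠ a' ∧ b ∈ X ∧ b ∈ X') ∧
      (∃ c ∈ X, c ∉ Ma') ∧ (∃ c' ∈ X', c' ∉ Ma'))
    (hH' : H ∈ ℋ) (ha'H : a' ∈ H) (hK : K ∈ ℋ) : ¬ X ⊆ K ∧ ¬ X' ⊆ K := by
  obtain ⟨m, hm⟩ := exists_isMinCluster hH' ha'H
  obtain ⟨M, hM⟩ := exists_isMaxCluster hℋ hH' ha'H
  obtain ⟨⟨b, hbm, -, hbX, hbX'⟩, ⟨c, hcX, hcM⟩, c', hc'X', hc'M⟩ := hyp1 m M hm hM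
  by_cases hbK : b ∈ K
  · have hKM := hM.subset_of_inter_nonempty hH hm.1 hm.2.1 hK ⟨b, mem_inter.2 ⟨hbK, hbm⟩⟩
    exact ⟨fun h => hcM (hKM (h hcX)), fun h => hc'M (hKM (h hc'X'))⟩
  · exact ⟨fun h => hbK (h hbX), fun h => hbK (h hbX')⟩

theorem not_subset_of_maxClusterContaining_misses (hH : IsHierarchy ℋ) (hℋ : ℋ.Finite)
    {a : β} {J X X' K : Finset β} (hJ : J ∈ ℋ) (haJ : a ∈ J)
    (hyp2 : ∃ d, d ∈ X ∧ d ∈ X' ∧ ∀ MJ : Finset β, IsMaxClusterContaining ℋ J MJ → d ∉ MJ)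
    (hK : K ∈ ℋ) (hJK : J ⊆ K) : ¬ X ⊆ K ∧ ¬ X' ⊆ K := by
  obtain ⟨d, hdX, hdX', hd⟩ := hyp2
  obtain ⟨MJ, hMJ⟩ := exists_isMaxClusterContaining hℋ hJ
  have hdK : d ∉ K := fun h => hd MJ hMJ (hMJ.subset_of_subset hH ⟨a, haJ⟩ hK hJK h)
  exact ⟨fun h => hdK (h hdX), fun h => hdK (h hdX')⟩

theorem inter_nonempty_and_disjoint_below (hH : IsHierarchy ℋ) {a : β} {J X' : Finset β}
    (hyp3 : (∀ Jb : Finset β, Jb ∈ ℋ → a ∈ Jb → Jb ⊂ J →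
        (∀ J2 ∈ ℋ, a ∈ J2 → J2 ⊂ J → ¬ Jb ⊂ J2) →
        (∃ x ∈ X', x ∈ J ∧ x ∉ Jb) ∧ X' ∩ Jb = ∅) ∧
      ((¬ ∃ Jb ∈ ℋ, a ∈ Jb ∧ Jb ⊂ J) → (X' ∩ J).Nonempty)) :
    (J ∩ X').Nonempty ∧ ∀ K ∈ ℋ, a ∈ K → K ⊂ J → Disjoint K X' := by
  by_cases hbelow : ∃ Jb ∈ ℋ, a ∈ Jb ∧ Jb ⊂ J
  · obtain ⟨Jb, hJbmax⟩ := ((J.powerset : Set (Finset β)).toFinite.subset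
      fun H (h : H ∈ ℋ ∧ a ∈ H ∧ H ⊂ J) => mem_powerset.2 h.2.2.subset).exists_maximal hbelow
    obtain ⟨hJb, haJb, hJbJ⟩ := hJbmax.prop
    obtain ⟨⟨x, hxX', hxJ, -⟩, hX'Jb⟩ :=
      hyp3.1 Jb hJb haJb hJbJ fun J2 hJ2 haJ2 hJ2J => hJbmax.not_gt ⟨hJ2, haJ2, hJ2J⟩
    refine ⟨⟨x, mem_inter.2 ⟨hxJ, hxX'⟩⟩, fun K hK haK hKJ => ?_⟩
    have hKJb : K ⊆ Jb := hH.subset_of_not_ssubset hK hJb ⟨a, mem_inter.2 ⟨haK, haJb⟩⟩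
      (hJbmax.not_gt ⟨hK, haK, hKJ⟩)
    exact (disjoint_iff_inter_eq_empty.2 hX'Jb).symm.mono_left hKJb
  · exact ⟨inter_comm X' J ▸ hyp3.2 hbelow, fun K hK haK hKJ => absurd ⟨K, hK, haK, hKJ⟩ hbelow⟩

theorem inter_nonempty_above (hH : IsHierarchy ℋ) {a : β} {J X : Finset β} (haJ : a ∈ J)
    (hyp4 : ∀ Jt ∈ ℋ, J ⊂ Jt → (∀ J2 ∈ ℋ, J ⊂ J2 → ¬ J2 ⊂ Jt) → ∃ x ∈ X, x ∈ Jt ∧ x ∉ J)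
    {K : Finset β} (hK : K ∈ ℋ) (hJK : J ⊂ K) : (K ∩ X).Nonempty := by
  obtain ⟨Jt, ⟨hJt, hJJt⟩, hmin⟩ := wellFounded_lt.has_min {H | H ∈ ℋ ∧ J ⊂ H} ⟨K, hK, hJK⟩
  obtain ⟨x, hxX, hxJt, -⟩ := hyp4 Jt hJt hJJt fun J2 hJ2 hJJ2 => hmin J2 ⟨hJ2, hJJ2⟩
  have hJtK : Jt ⊆ K := hH.subset_of_not_ssubset hJt hK
    ⟨a, mem_inter.2 ⟨hJJt.subset haJ, hJK.subset haJ⟩⟩ (hmin K ⟨hK, hJK⟩)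
  exact ⟨x, mem_inter.2 ⟨hJtK hxJt, hxX⟩⟩

end Hierarchy

theorem lemma_a_a'_X_X'_general (n : ℕ)
    (ℋ : Set (Finset (Fin n))) (hH : IsHierarchy ℋ)
    (a a' : Fin n) (J : Finset (Fin n)) (hJ : J ∈ ℋ) (haJ : a ∈ J) (ha'J : a' ∉ J)
    (X X' : Finset (Fin n))
    -- (1) if `a' ∈ ∪ℋ`, both `X` and `X'` contain an element `b ∈ m_{a'} - {a'}`,
    -- `X` contains an element `c ∉ M_{a'}` and `X'` contains an element `c' ∉ M_{a'}`:
    (hyp1 : ∀ ma' Ma' : Finset (Fin n),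
      IsMinCluster ℋ a' ma' → IsMaxCluster ℋ a' Ma' →
      (∃ b, b ∈ ma' ∧ b ≠ a' ∧ b ∈ X ∧ b ∈ X') ∧
      (∃ c ∈ X, c ∉ Ma') ∧ (∃ c' ∈ X', c' ∉ Ma'))
    -- (2) if `a' ∉ ∪ℋ`, both `X` and `X'` contain an element not in the maximal
    -- cluster containing `J`:
    (hyp2 : (¬ ∃ H ∈ ℋ, a' ∈ H) →
      ∃ d, d ∈ X ∧ d ∈ X' ∧ ∀ MJ : Finset (Fin n),
        IsMaxClusterContaining ℋ J MJ → d ∉ MJ)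
    -- (3) if there is a maximal `J̄ ∈ ℋ` with `a ∈ J̄ ⊊ J`, then `X'` contains an
    -- element of `J - J̄` and `X' ∩ J̄ = ∅`; if there is no such cluster, `X' ∩ J ≠ ∅`:
    (hyp3 : (∀ Jb : Finset (Fin n), Jb ∈ ℋ → a ∈ Jb → Jb ⊂ J →
        (∀ J2 ∈ ℋ, a ∈ J2 → J2 ⊂ J → ¬ Jb ⊂ J2) →
        (∃ x ∈ X', x ∈ J ∧ x ∉ Jb) ∧ X' ∩ Jb = ∅) ∧
      ((¬ ∃ Jb ∈ ℋ, a ∈ Jb ∧ Jb ⊂ J) → (X' ∩ J).Nonempty))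
    -- (4) `X ∩ J = ∅`, and if there is a minimal `J̃ ∈ ℋ` with `J ⊊ J̃`, then `X`
    -- contains an element of `J̃ - J`:
    (hyp4 : X ∩ J = ∅ ∧ ∀ Jt ∈ ℋ, J ⊂ Jt →
        (∀ J2 ∈ ℋ, J ⊂ J2 → ¬ J2 ⊂ Jt) → ∃ x ∈ X, x ∈ Jt ∧ x ∉ J) :
    (Finsupp.single J 1 : Finset (Fin n) →₀ ℤ) =
      hsum ℋ (insert a X) - hsum ℋ (insert a' X)
        - hsum ℋ (insert a X') + hsum ℋ (insert a' X') := by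
  have hℋ : ℋ.Finite := Set.toFinite ℋ
  obtain ⟨hJX', h_below⟩ := inter_nonempty_and_disjoint_below hH hyp3
  refine single_eq_alternating_hsum hH hℋ hJ haJ ha'J
    (fun K hK ha'K => inter_nonempty_of_minCluster_meets hH hℋ hyp1 hK ha'K)
    (fun K hK hK' => ?_) (disjoint_iff_inter_eq_empty.2 hyp4.1).symm hJX'
    (fun K hK hJK => inter_nonempty_above hH haJ hyp4.2 hK hJK) h_below
  by_cases ha' : ∃ H ∈ ℋ, a' ∈ H
  · obtain ⟨H, hH', ha'H⟩ := ha'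
    exact not_subset_of_minCluster_meets_of_maxCluster_misses hH hℋ hyp1 hH' ha'H hK
  · exact not_subset_of_maxClusterContaining_misses hH hℋ hJ haJ (hyp2 ha') hK
      (hK'.resolve_left fun h => ha' ⟨K, hK, h⟩)

/-- **Lemma.** Let `4 ≤ k ≤ n-2` and let `ℋ` be a hierarchy over `[n]` whose clusters
have cardinality at least `2` and at most `n-k`. Let `a, a' ∈ [n]`, `J ∈ ℋ` with
`a ∈ J`, `a' ∉ J`, and let `X, X' ∈ ([n]-{a,a'} choose k-1)` satisfy conditions
(1)–(4) below. Then, in the free ℤ-module on `ℋ`,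
`J = Σ_{H∩({a}∪X)≠∅, H⊉{a}∪X} H - Σ_{H∩({a'}∪X)≠∅, H⊉{a'}∪X} H
   - Σ_{H∩({a}∪X')≠∅, H⊉{a}∪X'} H + Σ_{H∩({a'}∪X')≠∅, H⊉{a'}∪X'} H`. -/
theorem lemma_a_a'_X_X' (n k : ℕ) (hk4 : 4 ≤ k) (hkn : k ≤ n - 2)
    (ℋ : Set (Finset (Fin n))) (hH : IsHierarchy ℋ)
    (hcard : ∀ H ∈ ℋ, 2 ≤ H.card ∧ H.card ≤ n - k)
    (a a' : Fin n) (J : Finset (Fin n)) (hJ : J ∈ ℋ) (haJ : a ∈ J) (ha'J : a' ∉ J)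
    (X X' : Finset (Fin n))
    (hXcard : X.card = k - 1) (haX : a ∉ X) (ha'X : a' ∉ X)
    (hX'card : X'.card = k - 1) (haX' : a ∉ X') (ha'X' : a' ∉ X')
    -- (1) if `a' ∈ ∪ℋ`, both `X` and `X'` contain an element `b ∈ m_{a'} - {a'}`,
    -- `X` contains an element `c ∉ M_{a'}` and `X'` contains an element `c' ∉ M_{a'}`:
    (hyp1 : ∀ ma' Ma' : Finset (Fin n),
      IsMinCluster ℋ a' ma' → IsMaxCluster ℋ a' Ma' →
      (∃ b, b ∈ ma' ∧ b ≠ a' ∧ b ∈ X ∧ b ∈ X') ∧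
      (∃ c ∈ X, c ∉ Ma') ∧ (∃ c' ∈ X', c' ∉ Ma'))
    -- (2) if `a' ∉ ∪ℋ`, both `X` and `X'` contain an element not in the maximal
    -- cluster containing `J`:
    (hyp2 : (¬ ∃ H ∈ ℋ, a' ∈ H) →
      ∃ d, d ∈ X ∧ d ∈ X' ∧ ∀ MJ : Finset (Fin n),
        IsMaxClusterContaining ℋ J MJ → d ∉ MJ)
    -- (3) if there is a maximal `J̄ ∈ ℋ` with `a ∈ J̄ ⊊ J`, then `X'` contains an
    -- element of `J - J̄` and `X' ∩ J̄ = ∅`; if there is no such cluster, `X' ∩ J ≠ ∅`: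
    (hyp3 : (∀ Jb : Finset (Fin n), Jb ∈ ℋ → a ∈ Jb → Jb ⊂ J →
        (∀ J2 ∈ ℋ, a ∈ J2 → J2 ⊂ J → ¬ Jb ⊂ J2) →
        (∃ x ∈ X', x ∈ J ∧ x ∉ Jb) ∧ X' ∩ Jb = ∅) ∧
      ((¬ ∃ Jb ∈ ℋ, a ∈ Jb ∧ Jb ⊂ J) → (X' ∩ J).Nonempty))
    -- (4) `X ∩ J = ∅`, and if there is a minimal `J̃ ∈ ℋ` with `J ⊊ J̃`, then `X`
    -- contains an element of `J̃ - J`: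
    (hyp4 : X ∩ J = ∅ ∧ ∀ Jt ∈ ℋ, J ⊂ Jt →
        (∀ J2 ∈ ℋ, J ⊂ J2 → ¬ J2 ⊂ Jt) → ∃ x ∈ X, x ∈ Jt ∧ x ∉ J) :
    (Finsupp.single J 1 : Finset (Fin n) →₀ ℤ) =
      hsum ℋ (insert a X) - hsum ℋ (insert a' X)
        - hsum ℋ (insert a X') + hsum ℋ (insert a' X') :=
  lemma_a_a'_X_X'_general n ℋ hH a a' J hJ haJ ha'J X X' hyp1 hyp2 hyp3 hyp4

end
end

section
/- Let ℋ be a hierarchy over [n] all of whose clusters have cardinality at least 2, and let a,a' be distinct elements of [n]. Then #{J ∈ ℋ : a' ∈ J, a ∉ J} + #{J ∈ ℋ : a ∈ J, a' ∉ J} ≤ n−2. -/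
open scoped Classical
open Finset

noncomputable section

/-!
The clusters containing `a'` but not `a` are pairwise comparable, since they share `a'`; a
chain of sets of size at least 2 inside a set `S` has at most `#S - 1` members, because
their sizes are distinct. Every cluster of this chain is disjoint from every cluster
containing `a` but not `a'`, so the two chains live in disjoint sets `S ∋ a'` and
`S' ∋ a`, and `(#S - 1) + (#S' - 1) ≤ n - 2`.
-/

theorem IsHierarchy.disjoint_or_subset_or_subset {β : Type} {ℋ : Set (Finset β)}
    (hℋ : IsHierarchy ℋ) {H H' : Finset β} (hH : H ∈ ℋ) (hH' : H' ∈ ℋ) :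
    Disjoint H H' ∨ H ⊆ H' ∨ H' ⊆ H := by
  rw [Finset.disjoint_iff_inter_eq_empty, ← Finset.inter_eq_left, ← Finset.inter_eq_right]
  exact hℋ H hH H' hH'

theorem IsHierarchy.isChain_setOf_mem {β : Type} {ℋ : Set (Finset β)} (hℋ : IsHierarchy ℋ)
    (x : β) : IsChain (· ⊆ ·) {J | J ∈ ℋ ∧ x ∈ J} := by
  rintro J ⟨hJ, hxJ⟩ K ⟨hK, hxK⟩ -
  rcases hℋ.disjoint_or_subset_or_subset hJ hK with hdisj | hsub | hsub
  · exact absurd hxK (Finset.disjoint_left.mp hdisj hxJ)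
  · exact Or.inl hsub
  · exact Or.inr hsub

theorem IsHierarchy.disjoint_of_separates {β : Type} {ℋ : Set (Finset β)}
    (hℋ : IsHierarchy ℋ) {J K : Finset β} (hJ : J ∈ ℋ) (hK : K ∈ ℋ) {x y : β}
    (hxJ : x ∈ J) (hxK : x ∉ K) (hyK : y ∈ K) (hyJ : y ∉ J) : Disjoint J K := by
  rcases hℋ.disjoint_or_subset_or_subset hJ hK with hdisj | hsub | hsub
  · exact hdisj
  · exact absurd (hsub hxJ) hxK
  · exact absurd (hsub hyK) hyJ

theorem IsChain.ncard_le_card_sub_one {β : Type*} {𝒞 : Set (Finset β)} {S : Finset β}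
    (h𝒞 : IsChain (· ⊆ ·) 𝒞) (hsub : ∀ J ∈ 𝒞, J ⊆ S) (hcard : ∀ J ∈ 𝒞, 2 ≤ J.card) :
    𝒞.ncard ≤ S.card - 1 := by
  have hinj : Set.InjOn Finset.card 𝒞 := by
    intro J hJ K hK hJK
    rcases h𝒞.total hJ hK with hsub | hsub
    · exact Finset.eq_of_subset_of_card_le hsub hJK.ge
    · exact (Finset.eq_of_subset_of_card_le hsub hJK.le).symm
  calc 𝒞.ncard ≤ (↑(Finset.Icc 2 S.card) : Set ℕ).ncard :=
        Set.ncard_le_ncard_of_injOn Finset.card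
          (fun J hJ => by simpa using ⟨hcard J hJ, Finset.card_le_card (hsub J hJ)⟩)
          hinj (Finset.finite_toSet _)
    _ = S.card - 1 := by rw [Set.ncard_coe_finset, Nat.card_Icc]; omega

/-- **Lemma.** For a hierarchy `ℋ` over `[n]` whose clusters all have cardinality at
least 2, and distinct `a, a' ∈ [n]`,
`#{J ∈ ℋ : a' ∈ J, a ∉ J} + #{J ∈ ℋ : a ∈ J, a' ∉ J} ≤ n - 2`. -/
theorem hierarchy_chain_count (n : ℕ) (ℋ : Set (Finset (Fin n)))
    (hH : IsHierarchy ℋ) (hcard : ∀ H ∈ ℋ, 2 ≤ H.card)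
    (a a' : Fin n) (haa : a ≠ a') :
    {J | J ∈ ℋ ∧ a' ∈ J ∧ a ∉ J}.ncard + {J | J ∈ ℋ ∧ a ∈ J ∧ a' ∉ J}.ncard
      ≤ n - 2 := by
  set A := {J | J ∈ ℋ ∧ a' ∈ J ∧ a ∉ J}
  set B := {J | J ∈ ℋ ∧ a ∈ J ∧ a' ∉ J}
  set SA : Finset (Fin n) := insert a' (univ.filter fun x => ∃ J ∈ A, x ∈ J)
  set SB : Finset (Fin n) := insert a (univ.filter fun x => ∃ K ∈ B, x ∈ K)
  have hA_chain : IsChain (· ⊆ ·) A :=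
    (hH.isChain_setOf_mem a').mono fun _ => And.imp_right And.left
  have hB_chain : IsChain (· ⊆ ·) B :=
    (hH.isChain_setOf_mem a).mono fun _ => And.imp_right And.left
  have hA : A.ncard ≤ SA.card - 1 := hA_chain.ncard_le_card_sub_one
    (fun J hJ x hx => mem_insert_of_mem (mem_filter.mpr ⟨mem_univ x, J, hJ, hx⟩))
    (fun J hJ => hcard J hJ.1)
  have hB : B.ncard ≤ SB.card - 1 := hB_chain.ncard_le_card_sub_one
    (fun K hK x hx => mem_insert_of_mem (mem_filter.mpr ⟨mem_univ x, K, hK, hx⟩))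
    (fun K hK => hcard K hK.1)
  have hdisj : Disjoint SA SB := by
    simp only [SA, SB, disjoint_left, mem_insert, mem_filter, mem_univ, true_and, not_or,
      not_exists, not_and]
    rintro x (rfl | ⟨J, ⟨hJ, ha'J, haJ⟩, hxJ⟩)
    · exact ⟨haa.symm, fun K hK => hK.2.2⟩
    · refine ⟨fun hxa => haJ (hxa ▸ hxJ), fun K ⟨hK, haK, ha'K⟩ => ?_⟩
      exact disjoint_left.mp (hH.disjoint_of_separates hJ hK ha'J ha'K haK haJ) hxJ
  have hSA : 1 ≤ SA.card := card_pos.mpr (insert_nonempty _ _)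
  have hSB : 1 ≤ SB.card := card_pos.mpr (insert_nonempty _ _)
  have hunion : SA.card + SB.card ≤ n := by
    simpa [card_union_of_disjoint hdisj] using card_le_univ (SA ∪ SB)
  omega

end
end

section
/- Let k,n ∈ ℕ with 2 ≤ k ≤ n−2, and let 𝒫=(P,w) be a weighted tree with L(P)=[n]. If i,j ∈ [n] are neighbours, then D_{{i}∪X}(𝒫) − D_{{j}∪X}(𝒫) does not depend on the choice of X ∈ ([n]−{i,j} choose k−1). -/
open scoped Classical
open Finset

noncomputable section

/-!
Let `v` be the unique node on the path `p` between the neighbours `i` and `j`. Every vertex off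
`p` hangs off it at `v`: the first vertex of `p` reached from outside has a neighbour off `p`, so
it is neither a leaf endpoint of `p` nor an interior vertex of degree two, hence it is the node
`v`. So for `X` avoiding `i, j` the minimal subtree spanning `{i} ∪ X` is the disjoint union of
the path from `i` to `v` and the paths from `v` to the leaves of `X`, and `D_{iX} - D_{jX}` is the
weight of the path from `i` to `v` minus that of the path from `j` to `v`.
-/

namespace SimpleGraph

variable {V : Type} {G : SimpleGraph V}

namespace Walk

lemma IsPath.append {a b c : V} {p : G.Walk a b} {q : G.Walk b c} (hp : p.IsPath)
    (hq : q.IsPath) (h : ∀ u ∈ p.support, u ∈ q.support → u = b) : (p.append q).IsPath := by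
  rw [isPath_def, support_append, List.nodup_append]
  have hq' := hq.support_nodup
  rw [← cons_tail_support q, List.nodup_cons] at hq'
  refine ⟨hp.support_nodup, hq'.2, fun u hu u' hu' hne => ?_⟩
  subst hne
  exact hq'.1 (h u hu (List.mem_of_mem_tail hu') ▸ hu')

lemma exists_adj_mem_support {a b m : V} (p : G.Walk a b) (hab : a ≠ b)
    (hm : m ∈ p.support) : ∃ u ∈ p.support, G.Adj m u := by
  by_cases hmb : m = b
  · subst hmb
    obtain ⟨u, hadj, q, hq⟩ := exists_eq_cons_of_ne hab.symm p.reverse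
    exact ⟨u, by simpa using (show u ∈ p.reverse.support by simp [hq]), hadj⟩
  · obtain ⟨u, hadj, q, hq⟩ := exists_eq_cons_of_ne hmb (p.dropUntil m hm)
    exact ⟨u, support_dropUntil_subset_support p hm (by simp [hq]), hadj⟩

lemma IsPath.exists_two_adj_mem_support {a b m : V} {p : G.Walk a b} (hp : p.IsPath)
    (hm : m ∈ p.support) (ha : m ≠ a) (hb : m ≠ b) :
    ∃ u₁ ∈ p.support, ∃ u₂ ∈ p.support, u₁ ≠ u₂ ∧ G.Adj m u₁ ∧ G.Adj m u₂ := by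
  obtain ⟨u₁, h₁, q₁, hq₁⟩ := exists_eq_cons_of_ne ha (p.takeUntil m hm).reverse
  obtain ⟨u₂, h₂, q₂, hq₂⟩ := exists_eq_cons_of_ne hb (p.dropUntil m hm)
  have hu₁ : u₁ ∈ (p.takeUntil m hm).support := by
    simpa using (show u₁ ∈ (p.takeUntil m hm).reverse.support by simp [hq₁])
  have hu₂ : u₂ ∈ (p.dropUntil m hm).support.tail := by simp [hq₂]
  have hnd := hp.support_nodup
  rw [← take_spec p hm, support_append, List.nodup_append] at hnd
  exact ⟨u₁, support_takeUntil_subset_support p hm hu₁, u₂,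
    support_dropUntil_subset_support p hm (List.mem_of_mem_tail hu₂), hnd.2.2 u₁ hu₁ u₂ hu₂, h₁, h₂⟩

lemma exists_isPath_to_set {S : Set V} {c d : V} (r : G.Walk c d) (hd : d ∈ S) :
    ∃ m ∈ S, ∃ t : G.Walk c m, t.IsPath ∧ ∀ u ∈ t.support, u ∈ S → u = m := by
  induction r with
  | nil => exact ⟨_, hd, nil, .nil, fun u hu _ => by simpa using hu⟩
  | @cons c c' d h r ih =>
    by_cases hc : c ∈ S
    · exact ⟨c, hc, nil, .nil, fun u hu _ => by simpa using hu⟩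
    obtain ⟨m, hm, t, -, ht⟩ := ih hd
    refine ⟨m, hm, (cons h t).bypass, bypass_isPath _, fun u hu huS => ?_⟩
    rcases List.mem_cons.mp (support_bypass_subset_support _ hu) with rfl | hu
    · exact absurd huS hc
    · exact ht u hu huS

end Walk

open Walk

lemma IsAcyclic.mem_edges_of_isPath (hG : G.IsAcyclic) {a b : V} {p : G.Walk a b}
    (hp : p.IsPath) {e : Sym2 V} (he : e ∈ p.edges) (q : G.Walk a b) : e ∈ q.edges := by
  have : q.bypass = p :=
    congrArg Subtype.val ((hG.subsingleton_path a b).elim ⟨_, q.bypass_isPath⟩ ⟨p, hp⟩)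
  exact edges_bypass_subset_edges q (this ▸ he)

lemma IsAcyclic.forall_walk_mem_edges_insert_iff (hG : G.IsAcyclic) {a c : V}
    (q : G.Walk a c) (t : ∀ b, G.Walk c b) {B : Finset V} (hB : B.Nonempty)
    (hqt : ∀ b ∈ B, (q.append (t b)).IsPath) (e : Sym2 V) :
    (e ∈ G.edgeSet ∧ ∃ x ∈ insert a B, ∃ y ∈ insert a B, ∀ p : G.Walk x y, e ∈ p.edges) ↔
      e ∈ q.edges ∨ ∃ b ∈ B, e ∈ (t b).edges := by
  constructor
  · rintro ⟨-, x, hx, y, hy, hxy⟩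
    rw [Finset.mem_insert] at hx hy
    rcases hx with rfl | hx <;> rcases hy with rfl | hy
    · simpa using hxy nil
    · have := hxy (q.append (t y))
      rw [edges_append, List.mem_append] at this
      exact this.imp_right fun h => ⟨y, hy, h⟩
    · have := hxy ((t x).reverse.append q.reverse)
      simp only [edges_append, edges_reverse, List.mem_append, List.mem_reverse] at this
      exact this.symm.imp_right fun h => ⟨x, hx, h⟩
    · have := hxy ((t x).reverse.append (t y))
      simp only [edges_append, edges_reverse, List.mem_append, List.mem_reverse] at this
      exact Or.inr (this.elim (fun h => ⟨x, hx, h⟩) (fun h => ⟨y, hy, h⟩))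
  · have mem_of_append : ∀ b ∈ B, e ∈ (q.append (t b)).edges → e ∈ G.edgeSet ∧
        ∃ x ∈ insert a B, ∃ y ∈ insert a B, ∀ p : G.Walk x y, e ∈ p.edges := fun b hb he =>
      ⟨edges_subset_edgeSet _ he, a, Finset.mem_insert_self _ _, b, Finset.mem_insert_of_mem hb,
        hG.mem_edges_of_isPath (hqt b hb) he⟩
    rintro (he | ⟨b, hb, he⟩)
    · obtain ⟨b, hb⟩ := hB
      exact mem_of_append b hb (by simp [edges_append, he])
    · exact mem_of_append b hb (by simp [edges_append, he])

end SimpleGraph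

section TreeWeight

open SimpleGraph Walk

variable {V : Type} [Fintype V] {G : SimpleGraph V}

lemma treeWeight_eq_sum_of_forall_iff (w : Sym2 V → ℝ) (A : Finset V) (s : Finset (Sym2 V))
    (h : ∀ e, (e ∈ G.edgeSet ∧ ∃ a ∈ A, ∃ b ∈ A, ∀ p : G.Walk a b, e ∈ p.edges) ↔ e ∈ s) :
    treeWeight G w A = ∑ e ∈ s, w e := by
  rw [treeWeight, ← Finset.sum_filter]
  congr 1
  ext e
  simp [h]

lemma SimpleGraph.IsAcyclic.treeWeight_insert (hG : G.IsAcyclic) (w : Sym2 V → ℝ) {a c : V}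
    (q : G.Walk a c) (t : ∀ b, G.Walk c b) {B : Finset V} (hB : B.Nonempty)
    (hqt : ∀ b ∈ B, (q.append (t b)).IsPath) :
    treeWeight G w (insert a B) =
      ∑ e ∈ q.edges.toFinset, w e + ∑ e ∈ B.biUnion fun b => (t b).edges.toFinset, w e := by
  rw [← Finset.sum_union]
  · refine treeWeight_eq_sum_of_forall_iff w _ _ fun e => ?_
    rw [hG.forall_walk_mem_edges_insert_iff q t hB hqt e]
    simp
  · refine Finset.disjoint_left.mpr fun e he he' => ?_
    obtain ⟨b, hb, he'⟩ := Finset.mem_biUnion.mp he'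
    have hnd := (hqt b hb).isTrail.edges_nodup
    rw [edges_append] at hnd
    exact List.disjoint_of_nodup_append hnd (List.mem_toFinset.mp he) (List.mem_toFinset.mp he')

end TreeWeight

namespace WTree

open SimpleGraph Walk

variable {α : Type} [Fintype α] (T : WTree α)

lemma eq_of_adj_label {x : α} {u₁ u₂ : T.V} (h₁ : T.G.Adj (T.label x) u₁)
    (h₂ : T.G.Adj (T.label x) u₂) : u₁ = u₂ := by
  obtain ⟨y, hy⟩ := Set.ncard_eq_one.mp ((T.leaf_iff _).mpr ⟨x, rfl⟩)
  have h₁' : u₁ ∈ T.G.neighborSet (T.label x) := h₁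
  have h₂' : u₂ ∈ T.G.neighborSet (T.label x) := h₂
  rw [hy] at h₁' h₂'
  exact h₁'.trans h₂'.symm

lemma eq_or_eq_of_label_mem_support {i j x : α} {p : T.G.Walk (T.label i) (T.label j)}
    (hp : p.IsPath) (hx : T.label x ∈ p.support) : x = i ∨ x = j := by
  by_contra! h
  obtain ⟨u₁, -, u₂, -, hne, h₁, h₂⟩ :=
    hp.exists_two_adj_mem_support hx (T.label_inj.ne h.1) (T.label_inj.ne h.2)
  exact hne (T.eq_of_adj_label h₁ h₂)

lemma mem_support_of_adj_label {a b u : T.V} {x : α} (p : T.G.Walk a b) (hab : a ≠ b)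
    (hx : T.label x ∈ p.support) (hu : T.G.Adj (T.label x) u) : u ∈ p.support := by
  obtain ⟨z, hz, hxz⟩ := p.exists_adj_mem_support hab hx
  exact T.eq_of_adj_label hxz hu ▸ hz

lemma exists_isPath_from_node {i j : α} (hij : i ≠ j) {p : T.G.Walk (T.label i) (T.label j)}
    (hp : p.IsPath) {v : T.V} (hv : ∀ u ∈ p.support, T.IsNode u → u = v) {u : T.V}
    (hu : u ∉ p.support) :
    ∃ t : T.G.Walk v u, t.IsPath ∧ ∀ z ∈ t.support, z ∈ p.support → z = v := by
  obtain ⟨r⟩ := T.isTree.connected.preconnected u (T.label i)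
  obtain ⟨m, hm, r, hr, hrp⟩ :=
    r.exists_isPath_to_set (S := {z | z ∈ p.support}) p.start_mem_support
  obtain ⟨y, hmy, r', hr'⟩ := exists_eq_cons_of_ne (fun h : m = u => hu (h ▸ hm)) r.reverse
  have hy : y ∉ p.support := fun h =>
    hmy.ne (hrp y (by simpa using (show y ∈ r.reverse.support by simp [hr'])) h).symm
  suffices m = v by
    subst this
    exact ⟨r.reverse, hr.reverse, fun z hz => hrp z (by simpa using hz)⟩
  have hij' : T.label i ≠ T.label j := T.label_inj.ne hij
  have hmi : m ≠ T.label i := fun h => hy (T.mem_support_of_adj_label p hij' (h ▸ hm) (h ▸ hmy))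
  have hmj : m ≠ T.label j := fun h => hy (T.mem_support_of_adj_label p hij' (h ▸ hm) (h ▸ hmy))
  obtain ⟨u₁, hu₁, u₂, hu₂, hne, h₁, h₂⟩ := hp.exists_two_adj_mem_support hm hmi hmj
  refine hv m hm ((Set.two_lt_ncard (Set.toFinite _)).mpr ⟨u₁, h₁, u₂, h₂, y, hmy, hne, ?_, ?_⟩)
  · rintro rfl
    exact hy hu₁
  · rintro rfl
    exact hy hu₂

lemma LeafNbr.exists_D_insert_eq [DecidableEq α] {i j : α} (h : T.LeafNbr i j) :
    ∃ (cᵢ cⱼ : ℝ) (F : Finset α → ℝ), ∀ X : Finset α, X.Nonempty → i ∉ X → j ∉ X →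
      T.D (insert i X) = cᵢ + F X ∧ T.D (insert j X) = cⱼ + F X := by
  obtain ⟨hij, p, hp, hnode⟩ := h
  obtain ⟨v, hv⟩ := Finset.card_eq_one.mp hnode
  have hvp : v ∈ p.support :=
    List.mem_toFinset.mp (Finset.mem_filter.mp (hv ▸ Finset.mem_singleton_self v)).1
  have hv_unique : ∀ u ∈ p.support, T.IsNode u → u = v := fun u hu hn =>
    Finset.mem_singleton.mp (hv ▸ Finset.mem_filter.mpr ⟨List.mem_toFinset.mpr hu, hn⟩)
  have hang : ∀ u, ∃ t : T.G.Walk v u,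
      u ∉ p.support → t.IsPath ∧ ∀ z ∈ t.support, z ∈ p.support → z = v := by
    intro u
    by_cases hu : u ∈ p.support
    · exact ⟨(T.isTree.connected.preconnected v u).some, fun h => absurd hu h⟩
    · obtain ⟨t, ht⟩ :=
        T.exists_isPath_from_node (fun h => hij (congrArg T.label h)) hp hv_unique hu
      exact ⟨t, fun _ => ht⟩
  choose t ht using hang
  have key : ∀ (x : α) (q : T.G.Walk (T.label x) v), q.IsPath →
      (∀ z ∈ q.support, z ∈ p.support) → ∀ X : Finset α, X.Nonempty → i ∉ X → j ∉ X →
      T.D (insert x X) = ∑ e ∈ q.edges.toFinset, T.w e +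
        ∑ e ∈ (X.image T.label).biUnion fun b => (t b).edges.toFinset, T.w e := by
    intro x q hq hqp X hX hiX hjX
    rw [D, Finset.image_insert]
    refine T.isTree.isAcyclic.treeWeight_insert T.w q t (hX.image _) fun b hb => ?_
    obtain ⟨y, hy, rfl⟩ := Finset.mem_image.mp hb
    have hyp : T.label y ∉ p.support := fun h =>
      (T.eq_or_eq_of_label_mem_support hp h).elim (fun h => hiX (h ▸ hy)) (fun h => hjX (h ▸ hy))
    obtain ⟨htp, htv⟩ := ht _ hyp
    exact hq.append htp fun u hu hu' => htv u hu' (hqp u hu)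
  exact ⟨_, _, _, fun X hX hiX hjX =>
    ⟨key i (p.takeUntil v hvp) (hp.takeUntil hvp)
      (fun _ hz => support_takeUntil_subset_support p hvp hz) X hX hiX hjX,
    key j (p.dropUntil v hvp).reverse (hp.dropUntil hvp).reverse
      (fun z hz => support_dropUntil_subset_support p hvp (by simpa using hz)) X hX hiX hjX⟩⟩

end WTree

theorem neighbours_diff_indep_general (n k : ℕ) (hk2 : 2 ≤ k)
    (T : WTree (Fin n)) (i j : Fin n) (hnb : T.LeafNbr i j) :
    ∀ X X' : Finset (Fin n),
      X.card = k - 1 → i ∉ X → j ∉ X → X'.card = k - 1 → i ∉ X' → j ∉ X' →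
      T.D (insert i X) - T.D (insert j X) =
        T.D (insert i X') - T.D (insert j X') := by
  intro X X' hX hiX hjX hX' hiX' hjX'
  obtain ⟨cᵢ, cⱼ, F, hD⟩ := hnb.exists_D_insert_eq
  have hXne : X.Nonempty := Finset.card_pos.mp (by omega)
  have hX'ne : X'.Nonempty := Finset.card_pos.mp (by omega)
  rw [(hD X hXne hiX hjX).1, (hD X hXne hiX hjX).2, (hD X' hX'ne hiX' hjX').1,
    (hD X' hX'ne hiX' hjX').2]
  ring

/-- **Proposition (1.1).** Let `2 ≤ k ≤ n-2` and let `𝒫 = (P,w)` be a weighted tree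
with `L(P) = [n]`. If `i, j ∈ [n]` are neighbours, then `D_{i,X} - D_{j,X}` does not
depend on `X ∈ ([n]-{i,j} choose k-1)`. -/
theorem neighbours_diff_indep (n k : ℕ) (hk2 : 2 ≤ k) (hkn : k ≤ n - 2)
    (T : WTree (Fin n)) (i j : Fin n) (hnb : T.LeafNbr i j) :
    ∀ X X' : Finset (Fin n),
      X.card = k - 1 → i ∉ X → j ∉ X → X'.card = k - 1 → i ∉ X' → j ∉ X' →
      T.D (insert i X) - T.D (insert j X) =
        T.D (insert i X') - T.D (insert j X') :=
  neighbours_diff_indep_general n k hk2 T i j hnb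

end
end

section
/- Let k,n ∈ ℕ with 2 ≤ k ≤ n−2, and let 𝒫=(P,w) be an internal-nonzero-weighted essential pseudostar of kind (n,k) with L(P)=[n]. If i,j ∈ [n] are such that D_{{i}∪X}(𝒫) − D_{{j}∪X}(𝒫) does not depend on the choice of X ∈ ([n]−{i,j} choose k−1), then i and j are neighbours. -/
open scoped Classical
open Finset

noncomputable section

/-!
Suppose `i` and `j` are not neighbours. Let `u` be the neighbour of the leaf `i` and `v` the next
vertex on the path from `u` to `j`. Since `P` is essential, `u` and `v` are nodes, so `s(u, v)` is
an internal edge and has nonzero weight. Take a leaf `x` in a third branch at `u` and a leaf `z` in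
a third branch at `v`: then `s(u, v)` is the only edge lying on both paths `i – j` and `z – x`.
Writing `D_I` as the sum of the weights of the edges that separate two elements of `I`, every other
edge cancels in `(D_{izC} - D_{jzC}) - (D_{ixC} - D_{jxC})`. For a set `C` of `k - 2` leaves on one
side of `s(u, v)`, which exists because `P` is a pseudostar, what is left is `w(u, v)` or
`2 w(u, v)`, so `D_{iX} - D_{jX}` takes different values at `X = zC` and `X = xC`.
-/

namespace SimpleGraph

variable {V : Type} {G : SimpleGraph V} {u v y y' a a' b b' c d ya yb yc yd : V} {e : Sym2 V}
  {S A : Finset V} {w : Sym2 V → ℝ}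

def branch (G : SimpleGraph V) (u y : V) : Set V := {a | ∃ p : G.Walk y a, u ∉ p.support}

lemma mem_branch_self (h : G.Adj u y) : y ∈ G.branch u y :=
  ⟨.nil, by simpa using h.ne⟩

lemma mem_branch_of_mem_support {p : G.Walk y a} (hu : u ∉ p.support) (hb : b ∈ p.support) :
    b ∈ G.branch u y :=
  ⟨p.takeUntil b hb, fun h => hu (p.support_takeUntil_subset_support hb h)⟩

lemma eq_of_mem_branch_of_neighborSet_eq (h : G.neighborSet y = {u}) (ha : a ∈ G.branch u y) :
    a = y := by
  obtain ⟨p, hu⟩ := ha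
  cases p with
  | nil => rfl
  | @cons _ t _ hadj q =>
    have ht : t ∈ G.neighborSet y := hadj
    obtain rfl := Set.mem_singleton_iff.mp (h ▸ ht)
    simp at hu

lemma Walk.exists_adj_walk_avoiding_start (p : G.Walk v a) (hva : v ≠ a) :
    ∃ y, G.Adj v y ∧ ∃ q : G.Walk y a, q.support ⊆ p.support ∧ v ∉ q.support := by
  have hP := p.toPath.2
  have hsub := p.support_toPath_subset_support
  generalize (p.toPath : G.Walk v a) = P at hP hsub
  cases P with
  | nil => exact absurd rfl hva
  | cons hadj q =>
    rw [Walk.cons_isPath_iff] at hP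
    exact ⟨_, hadj, q, fun t ht => hsub (by simp [ht]), hP.2⟩

lemma Reachable.exists_adj_mem_branch (h : G.Reachable v a) (hva : v ≠ a) :
    ∃ y, G.Adj v y ∧ a ∈ G.branch v y := by
  obtain ⟨y, hy, q, -, hq⟩ := h.some.exists_adj_walk_avoiding_start hva
  exact ⟨y, hy, q, hq⟩

lemma exists_adj_mem_branch_of_mem_branch (ha : a ∈ G.branch u v) (hva : v ≠ a) :
    ∃ y, G.Adj v y ∧ y ≠ u ∧ a ∈ G.branch v y := by
  obtain ⟨p, hu⟩ := ha
  obtain ⟨y, hy, q, hqp, hq⟩ := p.exists_adj_walk_avoiding_start hva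
  exact ⟨y, hy, fun h => hu (hqp (h ▸ q.start_mem_support)), q, hq⟩

def Separates (G : SimpleGraph V) (e : Sym2 V) (a b : V) : Prop :=
  ∀ p : G.Walk a b, e ∈ p.edges

lemma not_separates_self : ¬G.Separates e a a := fun h => by simpa using h .nil

lemma separates_comm : G.Separates e a b ↔ G.Separates e b a :=
  ⟨fun h p => by simpa using h p.reverse, fun h p => by simpa using h p.reverse⟩

lemma not_separates_trans (hab : ¬G.Separates e a b) (hbc : ¬G.Separates e b c) :
    ¬G.Separates e a c := by
  simp only [Separates, not_forall] at *
  obtain ⟨p, hp⟩ := hab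
  obtain ⟨q, hq⟩ := hbc
  exact ⟨p.append q, by simp [hp, hq]⟩

lemma separates_congr_left (h : ¬G.Separates e a a') :
    G.Separates e a b ↔ G.Separates e a' b :=
  ⟨fun hab => by_contra fun ha'b => not_separates_trans h ha'b hab,
    fun ha'b => by_contra fun hab => not_separates_trans (separates_comm.not.mp h) hab ha'b⟩

lemma separates_congr_right (h : ¬G.Separates e b b') :
    G.Separates e a b ↔ G.Separates e a b' := by
  rw [separates_comm, separates_congr_left h, separates_comm]

lemma not_separates_of_adj (h : G.Adj a b) (he : e ≠ s(a, b)) : ¬G.Separates e a b :=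
  fun hs => he (by simpa using hs h.toWalk)

lemma not_separates_of_mem_branch (ha : a ∈ G.branch u y) (he : u ∈ e) : ¬G.Separates e y a :=
  fun h => by
    obtain ⟨p, hu⟩ := ha
    exact hu (Walk.mem_support_of_mem_edges (h p) he)

lemma not_separates_of_mem_branch_of_ne (huy : G.Adj u y) (hyv : y ≠ v)
    (ha : a ∈ G.branch u y) : ¬G.Separates s(u, v) u a :=
  not_separates_trans (not_separates_of_adj huy fun h => hyv (Sym2.congr_right.mp h).symm)
    (not_separates_of_mem_branch ha (Sym2.mem_mk_left u v))

lemma Preconnected.not_separates_or (hG : G.Preconnected) (u v a : V) :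
    ¬G.Separates s(u, v) a u ∨ ¬G.Separates s(u, v) a v := by
  have step : ∀ {x b : V} (p : G.Walk x b),
      (¬G.Separates s(u, v) x u ∨ ¬G.Separates s(u, v) x v) →
        ¬G.Separates s(u, v) b u ∨ ¬G.Separates s(u, v) b v := by
    intro x b p
    induction p with
    | nil => exact id
    | @cons x c _ h q ih =>
      intro hx
      apply ih
      by_cases he : s(x, c) = s(u, v)
      · rcases Sym2.eq_iff.mp he with ⟨-, rfl⟩ | ⟨-, rfl⟩
        exacts [Or.inr not_separates_self, Or.inl not_separates_self]
      · have hxc := separates_comm.not.mp (not_separates_of_adj h (Ne.symm he))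
        exact hx.imp (not_separates_trans hxc) (not_separates_trans hxc)
  exact step (hG u a).some (Or.inl not_separates_self)

lemma IsAcyclic.separates_of_adj (hG : G.IsAcyclic) (h : G.Adj u v) : G.Separates s(u, v) u v :=
  isBridge_iff_forall_walk_mem_edges.mp (isAcyclic_iff_forall_adj_isBridge.mp hG h)

lemma IsAcyclic.eq_of_mem_branch (hG : G.IsAcyclic) (hy : G.Adj u y) (hy' : G.Adj u y')
    (ha : a ∈ G.branch u y) (ha' : a ∈ G.branch u y') : y = y' := by
  obtain ⟨p, hp⟩ := ha
  obtain ⟨p', hp'⟩ := ha'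
  by_contra hne
  have h := hG.separates_of_adj hy' (.cons hy (p.append p'.reverse))
  simp only [Walk.edges_cons, Walk.edges_append, Walk.edges_reverse, List.mem_cons,
    List.mem_append, List.mem_reverse] at h
  rcases h with h | h | h
  · exact hne (Sym2.congr_right.mp h).symm
  · exact hp (Walk.mem_support_of_mem_edges h (Sym2.mem_mk_left _ _))
  · exact hp' (Walk.mem_support_of_mem_edges h (Sym2.mem_mk_left _ _))

lemma IsAcyclic.branch_subset (hG : G.IsAcyclic) (huy : G.Adj u y) (hyy' : G.Adj y y')
    (hne : y' ≠ u) : G.branch y y' ⊆ G.branch u y := by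
  rintro a ⟨p, hp⟩
  refine ⟨.cons hyy' p, ?_⟩
  simp only [Walk.support_cons, List.mem_cons, not_or]
  exact ⟨huy.ne, fun hu => hne <| hG.eq_of_mem_branch hyy' huy.symm
    (mem_branch_of_mem_support hp hu) (mem_branch_self huy.symm)⟩

lemma IsAcyclic.exists_ncard_neighborSet_eq_one_mem_branch [Finite V] (hG : G.IsAcyclic)
    (h : G.Adj u y) : ∃ a ∈ G.branch u y, (G.neighborSet a).ncard = 1 := by
  induction hn : (G.branch u y).ncard using Nat.strong_induction_on generalizing u y with
  | _ n ih =>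
  by_cases hy : (G.neighborSet y).ncard = 1
  · exact ⟨y, mem_branch_self h, hy⟩
  have hpos : 0 < (G.neighborSet y).ncard := (Set.ncard_pos (Set.toFinite _)).mpr ⟨u, h.symm⟩
  obtain ⟨y', hy', hne⟩ := Set.exists_ne_of_one_lt_ncard (s := G.neighborSet y) (by omega) u
  have hsub := hG.branch_subset h hy' hne
  have hlt : (G.branch y y').ncard < n := by
    refine hn ▸ Set.ncard_lt_ncard ⟨hsub, fun hsub' => ?_⟩ (Set.toFinite _)
    obtain ⟨p, hp⟩ := hsub' (mem_branch_self h)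
    exact hp p.end_mem_support
  obtain ⟨a, ha, ha1⟩ := ih _ hlt hy' rfl
  exact ⟨a, hsub ha, ha1⟩

lemma IsAcyclic.not_separates_or_not_separates (hG : G.IsAcyclic) (hy : G.Adj u y)
    (hy' : G.Adj u y') (hne : y ≠ y') (ha : a ∈ G.branch u y) (hb : b ∈ G.branch u y') :
    ¬G.Separates e u a ∨ ¬G.Separates e u b := by
  obtain ⟨p, hp⟩ := ha
  obtain ⟨q, hq⟩ := hb
  by_contra! h
  have h1 := h.1 (.cons hy p)
  have h2 := h.2 (.cons hy' q)
  rw [Walk.edges_cons, List.mem_cons] at h1 h2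
  rcases h1 with rfl | h1
  · rcases h2 with h2 | h2
    · exact hne (Sym2.congr_right.mp h2)
    · exact hq (Walk.mem_support_of_mem_edges h2 (Sym2.mem_mk_left _ _))
  · rcases h2 with rfl | h2
    · exact hp (Walk.mem_support_of_mem_edges h1 (Sym2.mem_mk_left _ _))
    · induction e using Sym2.ind with
      | _ c d =>
      exact hne <| hG.eq_of_mem_branch hy hy'
        (mem_branch_of_mem_support hp (p.fst_mem_support_of_mem_edges h1))
        (mem_branch_of_mem_support hq (q.fst_mem_support_of_mem_edges h2))

/-- In a tree: the paths `a – b` and `c – d` have exactly the edge `s(u, v)` in common. -/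
structure IsQuartetEdge (G : SimpleGraph V) (u v a b c d : V) : Prop where
  adj : G.Adj u v
  side_a : ¬G.Separates s(u, v) u a
  side_d : ¬G.Separates s(u, v) u d
  side_b : ¬G.Separates s(u, v) v b
  side_c : ¬G.Separates s(u, v) v c
  eq_of_separates : ∀ e, G.Separates e a b → G.Separates e c d → e = s(u, v)

lemma IsQuartetEdge.symm (h : G.IsQuartetEdge u v a b c d) : G.IsQuartetEdge v u b a d c where
  adj := h.adj.symm
  side_a := by rw [Sym2.eq_swap]; exact h.side_b
  side_d := by rw [Sym2.eq_swap]; exact h.side_c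
  side_b := by rw [Sym2.eq_swap]; exact h.side_a
  side_c := by rw [Sym2.eq_swap]; exact h.side_d
  eq_of_separates e hba hdc :=
    (h.eq_of_separates e (separates_comm.mp hba) (separates_comm.mp hdc)).trans Sym2.eq_swap

lemma IsQuartetEdge.separates (h : G.IsQuartetEdge u v a b c d) (hG : G.IsAcyclic) :
    G.Separates s(u, v) a c := by
  rw [separates_congr_left (separates_comm.not.mp h.side_a),
    separates_congr_right (separates_comm.not.mp h.side_c)]
  exact hG.separates_of_adj h.adj

lemma IsAcyclic.isQuartetEdge (hG : G.IsAcyclic) (huv : G.Adj u v)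
    (hua : G.Adj u ya) (hud : G.Adj u yd) (hvb : G.Adj v yb) (hvc : G.Adj v yc)
    (had : ya ≠ yd) (hav : ya ≠ v) (hdv : yd ≠ v) (hbc : yb ≠ yc) (hbu : yb ≠ u) (hcu : yc ≠ u)
    (ha : a ∈ G.branch u ya) (hd : d ∈ G.branch u yd) (hb : b ∈ G.branch v yb)
    (hc : c ∈ G.branch v yc) : G.IsQuartetEdge u v a b c d where
  adj := huv
  side_a := not_separates_of_mem_branch_of_ne hua hav ha
  side_d := not_separates_of_mem_branch_of_ne hud hdv hd
  side_b := by rw [Sym2.eq_swap]; exact not_separates_of_mem_branch_of_ne hvb hbu hb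
  side_c := by rw [Sym2.eq_swap]; exact not_separates_of_mem_branch_of_ne hvc hcu hc
  eq_of_separates e hab hcd := by
    by_contra he
    have huv' : ¬G.Separates e u v := not_separates_of_adj huv he
    have hvu' : ¬G.Separates e v u := separates_comm.not.mp huv'
    -- `e` cuts `a` or `b` off the edge `s(u, v)`, and `c` or `d`; in all four cases it would cut
    -- off two vertices lying in different branches at `u` or at `v`
    have hab' : G.Separates e u a ∨ G.Separates e v b := by
      by_contra! h'
      exact not_separates_trans (not_separates_trans (separates_comm.not.mp h'.1) huv') h'.2 hab
    have hcd' : G.Separates e u d ∨ G.Separates e v c := by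
      by_contra! h'
      exact not_separates_trans (not_separates_trans (separates_comm.not.mp h'.2) hvu') h'.1 hcd
    rcases hab' with hab' | hab' <;> rcases hcd' with hcd' | hcd'
    · exact (hG.not_separates_or_not_separates hua hud had ha hd).elim (· hab') (· hcd')
    · exact (hG.not_separates_or_not_separates hua huv hav ha
        (hG.branch_subset huv hvc hcu hc)).elim (· hab') (· ((separates_congr_left hvu').mp hcd'))
    · exact (hG.not_separates_or_not_separates hvb huv.symm hbu hb
        (hG.branch_subset huv.symm hud hdv hd)).elim (· hab')
        (· ((separates_congr_left huv').mp hcd'))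
    · exact (hG.not_separates_or_not_separates hvb hvc hbc hb hc).elim (· hab') (· hcd')

def Cuts (G : SimpleGraph V) (e : Sym2 V) (A : Finset V) : Prop :=
  ∃ a ∈ A, ∃ b ∈ A, G.Separates e a b

def cutWeight (G : SimpleGraph V) (w : Sym2 V → ℝ) (e : Sym2 V) (A : Finset V) : ℝ :=
  if e ∈ G.edgeSet ∧ G.Cuts e A then w e else 0

lemma cuts_insert_of_not_separates (h : ¬G.Separates e a b) (hA : G.Cuts e (insert a S)) :
    G.Cuts e (insert b S) := by
  have hmove : ∀ c ∈ insert a S, ∃ c' ∈ insert b S, ¬G.Separates e c c' := by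
    intro c hc
    rcases mem_insert.mp hc with rfl | hc
    exacts [⟨b, mem_insert_self _ _, h⟩, ⟨c, mem_insert_of_mem hc, not_separates_self⟩]
  obtain ⟨c, hc, d, hd, hcd⟩ := hA
  obtain ⟨c', hc', hcc'⟩ := hmove c hc
  obtain ⟨d', hd', hdd'⟩ := hmove d hd
  exact ⟨c', hc', d', hd', (separates_congr_right hdd').mp ((separates_congr_left hcc').mp hcd)⟩

lemma cuts_insert_iff (h : ¬G.Separates e a b) :
    G.Cuts e (insert a S) ↔ G.Cuts e (insert b S) :=
  ⟨cuts_insert_of_not_separates h, cuts_insert_of_not_separates (separates_comm.not.mp h)⟩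

lemma cutWeight_insert_eq (h : ¬G.Separates e a b) :
    G.cutWeight w e (insert a S) = G.cutWeight w e (insert b S) := by
  simp only [cutWeight, cuts_insert_iff h]

lemma cutWeight_eq_or : G.cutWeight w e A = w e ∨ G.cutWeight w e A = 0 := by
  unfold cutWeight
  split_ifs <;> simp

lemma cutWeight_of_separates (he : e ∈ G.edgeSet) (ha : a ∈ A) (hb : b ∈ A)
    (h : G.Separates e a b) : G.cutWeight w e A = w e :=
  if_pos ⟨he, a, ha, b, hb, h⟩

lemma cutWeight_eq_zero (h : ∀ a ∈ A, ¬G.Separates e u a) : G.cutWeight w e A = 0 :=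
  if_neg fun ⟨_, a, ha, b, hb, hab⟩ =>
    not_separates_trans (separates_comm.not.mp (h a ha)) (h b hb) hab

lemma IsQuartetEdge.cutWeight_ne_zero (h : G.IsQuartetEdge u v a b c d) (hG : G.IsAcyclic)
    (hw : w s(u, v) ≠ 0) (hS : ∀ s ∈ S, ¬G.Separates s(u, v) u s) :
    G.cutWeight w s(u, v) (insert a (insert c S)) - G.cutWeight w s(u, v) (insert b (insert c S)) -
      (G.cutWeight w s(u, v) (insert a (insert d S)) -
        G.cutWeight w s(u, v) (insert b (insert d S))) ≠ 0 := by
  have hf : s(u, v) ∈ G.edgeSet := h.adj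
  have hbd : G.Separates s(u, v) b d := by
    rw [Sym2.eq_swap]
    exact h.symm.separates hG
  have hmem : ∀ {t t' : V}, t ∈ insert t (insert t' S) ∧ t' ∈ insert t (insert t' S) :=
    ⟨mem_insert_self _ _, mem_insert_of_mem (mem_insert_self _ _)⟩
  rw [cutWeight_of_separates hf hmem.1 hmem.2 (h.separates hG),
    cutWeight_of_separates hf hmem.1 hmem.2 hbd,
    cutWeight_eq_zero (A := insert a (insert d S)) (u := u)
      (by simpa [h.side_a, h.side_d] using hS)]
  rcases cutWeight_eq_or (G := G) (w := w) (e := s(u, v)) (A := insert b (insert c S))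
    with hbc | hbc <;> rw [hbc] <;> intro <;> exact hw (by linarith)

end SimpleGraph

section TreeWeight

open SimpleGraph

variable {V : Type} [Fintype V] {G : SimpleGraph V} {w : Sym2 V → ℝ} {f : Sym2 V}
  {u v a b c d : V} {S : Finset V}

lemma treeWeight_eq_sum_cutWeight (G : SimpleGraph V) (w : Sym2 V → ℝ) (A : Finset V) :
    treeWeight G w A = ∑ e, G.cutWeight w e A :=
  Finset.sum_congr rfl fun _ _ => if_congr Iff.rfl rfl rfl

lemma treeWeight_quartet (h : ∀ e, G.Separates e a b → G.Separates e c d → e = f) :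
    treeWeight G w (insert a (insert c S)) - treeWeight G w (insert b (insert c S)) -
      (treeWeight G w (insert a (insert d S)) - treeWeight G w (insert b (insert d S))) =
    G.cutWeight w f (insert a (insert c S)) - G.cutWeight w f (insert b (insert c S)) -
      (G.cutWeight w f (insert a (insert d S)) - G.cutWeight w f (insert b (insert d S))) := by
  simp only [treeWeight_eq_sum_cutWeight, ← Finset.sum_sub_distrib]
  refine Finset.sum_eq_single f (fun e _ he => ?_) (by simp)
  by_cases hab : G.Separates e a b
  · have hcd : ¬G.Separates e c d := fun hcd => he (h e hab hcd)
    rw [insert_comm a c, insert_comm b c, insert_comm a d, insert_comm b d,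
      cutWeight_insert_eq hcd, cutWeight_insert_eq hcd]
    ring
  · rw [cutWeight_insert_eq hab, cutWeight_insert_eq hab]
    ring

lemma SimpleGraph.IsQuartetEdge.treeWeight_sub_ne (h : G.IsQuartetEdge u v a b c d)
    (hG : G.IsAcyclic) (hw : w s(u, v) ≠ 0)
    (hS : (∀ s ∈ S, ¬G.Separates s(u, v) u s) ∨ ∀ s ∈ S, ¬G.Separates s(u, v) v s) :
    treeWeight G w (insert a (insert c S)) - treeWeight G w (insert b (insert c S)) ≠
      treeWeight G w (insert a (insert d S)) - treeWeight G w (insert b (insert d S)) := by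
  rw [← sub_ne_zero, treeWeight_quartet h.eq_of_separates]
  rcases hS with hS | hS
  · exact h.cutWeight_ne_zero hG hw hS
  · have := h.symm.cutWeight_ne_zero hG (by rwa [Sym2.eq_swap]) (by rwa [Sym2.eq_swap])
    rw [Sym2.eq_swap] at this
    contrapose! this
    linarith

end TreeWeight

lemma Set.exists_mem_ne_ne_of_two_lt_ncard {α : Type} {s : Set α} (hs : 2 < s.ncard) (a b : α) :
    ∃ y ∈ s, y ≠ a ∧ y ≠ b := by
  by_contra! h
  have hsub : s ⊆ {a, b} := fun y hy => by
    by_cases hya : y = a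
    · exact Or.inl hya
    · exact Or.inr (h y hy hya)
  have := (Set.ncard_le_ncard hsub (Set.toFinite _)).trans (Set.ncard_insert_le a {b})
  simp only [Set.ncard_singleton] at this
  omega

namespace WTree

open SimpleGraph

variable {α : Type} [Fintype α] (T : WTree α)

lemma ncard_neighborSet_label (i : α) : (T.G.neighborSet (T.label i)).ncard = 1 :=
  (T.leaf_iff _).mpr ⟨i, rfl⟩

lemma exists_adj_label (i : α) : ∃ v, T.G.Adj (T.label i) v := by
  obtain ⟨v, hv⟩ := Set.ncard_eq_one.mp (T.ncard_neighborSet_label i)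
  exact ⟨v, show v ∈ T.G.neighborSet (T.label i) by simp [hv]⟩

lemma neighborSet_label_eq {i : α} {v : T.V} (h : T.G.Adj (T.label i) v) :
    T.G.neighborSet (T.label i) = {v} := by
  obtain ⟨v', hv'⟩ := Set.ncard_eq_one.mp (T.ncard_neighborSet_label i)
  have hv : v ∈ T.G.neighborSet (T.label i) := h
  rw [hv', Set.mem_singleton_iff] at hv
  rw [hv', hv]

lemma not_isNode_label (i : α) : ¬T.IsNode (T.label i) := by
  simp [IsNode, T.ncard_neighborSet_label i]

lemma mem_sideLeaves {u v : T.V} {l : α} :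
    l ∈ T.sideLeaves u v ↔ T.G.Separates s(u, v) (T.label l) v := by
  simp only [sideLeaves, Finset.mem_filter, Finset.mem_univ, true_and]
  rfl

lemma exists_label_mem_branch {u y : T.V} (h : T.G.Adj u y) :
    ∃ a, T.label a ∈ T.G.branch u y := by
  obtain ⟨a, ha, ha1⟩ := T.isTree.isAcyclic.exists_ncard_neighborSet_eq_one_mem_branch h
  obtain ⟨i, rfl⟩ := (T.leaf_iff a).mp ha1
  exact ⟨i, ha⟩

lemma isInternalEdge_of_isNode {u v : T.V} (h : T.G.Adj u v) (hu : T.IsNode u)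
    (hv : T.IsNode v) : T.IsInternalEdge s(u, v) :=
  ⟨h, fun a ha => (T.isTree.connected.preconnected.not_separates_or u v (T.label a)).elim
    (· (ha u hu)) (· (ha v hv))⟩

variable {T}

lemma IsNode.exists_adj_ne_ne {v : T.V} (h : T.IsNode v) (a b : T.V) :
    ∃ y, T.G.Adj v y ∧ y ≠ a ∧ y ≠ b :=
  Set.exists_mem_ne_ne_of_two_lt_ncard h a b

lemma IsEssential.isNode_of_adj (hess : T.IsEssential) {v a b : T.V} (ha : T.G.Adj v a)
    (hb : T.G.Adj v b) (hab : a ≠ b) : T.IsNode v := by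
  have := (Set.one_lt_ncard (s := T.G.neighborSet v)).mpr ⟨a, ha, b, hb, hab⟩
  have := hess v
  unfold IsNode
  omega

lemma IsEssential.leafNbr_of_adj (hess : T.IsEssential) {i j : α} (hij : i ≠ j) {v : T.V}
    (hi : T.G.Adj (T.label i) v) (hj : T.G.Adj v (T.label j)) : T.LeafNbr i j := by
  have hlij : T.label i ≠ T.label j := T.label_inj.ne hij
  refine ⟨hlij, .cons hi (.cons hj .nil), by simp [Walk.cons_isPath_iff, hi.ne, hj.ne, hlij],
    Finset.card_eq_one.mpr ⟨v, ?_⟩⟩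
  ext t
  simp only [Walk.support_cons, Walk.support_nil, List.toFinset_cons, List.toFinset_nil,
    insert_empty_eq, mem_filter, mem_insert, mem_singleton]
  constructor
  · rintro ⟨rfl | rfl | rfl, ht⟩
    exacts [absurd ht (T.not_isNode_label i), rfl, absurd ht (T.not_isNode_label j)]
  · rintro rfl
    exact ⟨by simp, hess.isNode_of_adj hi.symm hj hlij⟩

lemma IsEssential.exists_isQuartetEdge (hess : T.IsEssential) {i j l : α} (hij : i ≠ j)
    (hli : l ≠ i) (hlj : l ≠ j) (hnbr : ¬T.LeafNbr i j) :
    ∃ u v x z, T.IsNode u ∧ T.IsNode v ∧ x ≠ i ∧ z ≠ j ∧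
      T.G.IsQuartetEdge u v (T.label i) (T.label j) (T.label z) (T.label x) := by
  have hG := T.isTree.isAcyclic
  obtain ⟨u, hiu⟩ := T.exists_adj_label i
  have hbeyond : ∀ m ≠ i, T.label m ∈ T.G.branch (T.label i) u := fun m hm => by
    obtain ⟨y, hy, hm'⟩ := (T.isTree.connected.preconnected _ _).exists_adj_mem_branch
      (T.label_inj.ne hm.symm)
    have hy' : y ∈ T.G.neighborSet (T.label i) := hy
    rw [T.neighborSet_label_eq hiu, Set.mem_singleton_iff] at hy'
    rwa [← hy']
  -- the third leaf `l` keeps `i – u – j` from being the whole tree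
  have huj : u ≠ T.label j := by
    rintro rfl
    exact hlj (T.label_inj (eq_of_mem_branch_of_neighborSet_eq
      (T.neighborSet_label_eq hiu.symm) (hbeyond l hli)))
  obtain ⟨v, huv, hvi, hjv⟩ := exists_adj_mem_branch_of_mem_branch (hbeyond j hij.symm) huj
  have hvj : v ≠ T.label j := fun h => hnbr (hess.leafNbr_of_adj hij hiu (h ▸ huv))
  obtain ⟨yb, hvyb, hybu, hjyb⟩ := exists_adj_mem_branch_of_mem_branch hjv hvj
  have hu := hess.isNode_of_adj hiu.symm huv hvi.symm
  have hv := hess.isNode_of_adj huv.symm hvyb hybu.symm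
  obtain ⟨yd, huyd, hydi, hydv⟩ := hu.exists_adj_ne_ne (T.label i) v
  obtain ⟨yc, hvyc, hycu, hycb⟩ := hv.exists_adj_ne_ne u yb
  obtain ⟨x, hx⟩ := T.exists_label_mem_branch huyd
  obtain ⟨z, hz⟩ := T.exists_label_mem_branch hvyc
  have hi := mem_branch_self hiu.symm
  refine ⟨u, v, x, z, hu, hv, ?_, ?_, hG.isQuartetEdge huv hiu.symm huyd hvyb hvyc hydi.symm
    hvi.symm hydv hycb.symm hybu hycu hi hx hjyb hz⟩
  · rintro rfl
    exact hydi (hG.eq_of_mem_branch huyd hiu.symm hx hi)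
  · rintro rfl
    exact hycb (hG.eq_of_mem_branch hvyc hvyb hz hjyb)

lemma IsPseudostar.exists_D_sub_ne [DecidableEq α] {k : ℕ} (hps : T.IsPseudostar k)
    (hk : 2 ≤ k) {u v : T.V} {i j x z : α}
    (hq : T.G.IsQuartetEdge u v (T.label i) (T.label j) (T.label z) (T.label x))
    (hw : T.w s(u, v) ≠ 0) (hxi : x ≠ i) (hzj : z ≠ j) :
    ∃ X X' : Finset α, X.card = k - 1 ∧ i ∉ X ∧ j ∉ X ∧ X'.card = k - 1 ∧ i ∉ X' ∧ j ∉ X' ∧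
      T.D (insert i X) - T.D (insert j X) ≠ T.D (insert i X') - T.D (insert j X') := by
  wlog hside : k ≤ (T.sideLeaves u v).card generalizing u v i j x z
  · obtain ⟨X, X', hX, hjX, hiX, hX', hjX', hiX', hne⟩ := this hq.symm (by rwa [Sym2.eq_swap])
      hzj hxi ((hps u v hq.adj).resolve_left hside)
    exact ⟨X, X', hX, hiX, hjX, hX', hiX', hjX', fun h => hne (by linarith)⟩
  have hG := T.isTree.isAcyclic
  have hfar : ∀ l, ¬T.G.Separates s(u, v) v (T.label l) → T.G.Separates s(u, v) u (T.label l) :=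
    fun l h => (separates_congr_right (separates_comm.not.mp h)).mpr (hG.separates_of_adj hq.adj)
  have hcard : k - 2 ≤ (T.sideLeaves u v \ {i, x}).card := by
    have := le_card_sdiff {i, x} (T.sideLeaves u v)
    have := card_le_two (a := i) (b := x)
    omega
  obtain ⟨C, hCsub, hC⟩ := exists_subset_card_eq hcard
  have hCu : ∀ l ∈ C, ¬T.G.Separates s(u, v) u (T.label l) := fun l hl h =>
    (T.isTree.connected.preconnected.not_separates_or u v (T.label l)).elim
      (· (separates_comm.mp h)) (· (T.mem_sideLeaves.mp (mem_sdiff.mp (hCsub hl)).1))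
  have hiC : i ∉ C := fun h => (mem_sdiff.mp (hCsub h)).2 (by simp)
  have hxC : x ∉ C := fun h => (mem_sdiff.mp (hCsub h)).2 (by simp)
  have hjC : j ∉ C := fun h => hCu j h (hfar j hq.side_b)
  have hzC : z ∉ C := fun h => hCu z h (hfar z hq.side_c)
  have hzi : z ≠ i := by rintro rfl; exact hq.side_a (hfar z hq.side_c)
  have hxj : x ≠ j := by rintro rfl; exact hq.side_d (hfar x hq.side_b)
  refine ⟨insert z C, insert x C, by rw [card_insert_of_notMem hzC]; omega,
    by simp [hzi.symm, hiC], by simp [hzj.symm, hjC], by rw [card_insert_of_notMem hxC]; omega,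
    by simp [hxi.symm, hiC], by simp [hxj.symm, hjC], ?_⟩
  simpa only [WTree.D, image_insert] using hq.treeWeight_sub_ne hG hw (Or.inl (by simpa using hCu))

end WTree

/-- **Proposition (1.2).** Let `2 ≤ k ≤ n-2` and let `𝒫 = (P,w)` be an
internal-nonzero-weighted essential pseudostar of kind `(n,k)` with `L(P) = [n]`.
If for `i, j ∈ [n]` the quantity `D_{i,X} - D_{j,X}` does not depend on
`X ∈ ([n]-{i,j} choose k-1)`, then `i` and `j` are neighbours. -/
theorem diff_indep_neighbours (n k : ℕ) (hk2 : 2 ≤ k) (hkn : k ≤ n - 2)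
    (T : WTree (Fin n)) (hess : T.IsEssential) (hinz : T.InternalNonzero)
    (hps : T.IsPseudostar k) (i j : Fin n) (hij : i ≠ j)
    (hindep : ∀ X X' : Finset (Fin n),
      X.card = k - 1 → i ∉ X → j ∉ X → X'.card = k - 1 → i ∉ X' → j ∉ X' →
      T.D (insert i X) - T.D (insert j X) =
        T.D (insert i X') - T.D (insert j X')) :
    T.LeafNbr i j := by
  by_contra hnbr
  obtain ⟨l, hli, hlj⟩ := exists_mem_ne (s := univ.erase i)
    (by simp only [mem_univ, card_erase_of_mem, card_univ, Fintype.card_fin]; omega) j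
  obtain ⟨u, v, x, z, hu, hv, hxi, hzj, hq⟩ :=
    hess.exists_isQuartetEdge hij (ne_of_mem_erase hli) hlj hnbr
  obtain ⟨X, X', hX, hiX, hjX, hX', hiX', hjX', hne⟩ :=
    hps.exists_D_sub_ne hk2 hq (hinz _ (T.isInternalEdge_of_isNode hq.adj hu hv)) hxi hzj
  exact hne (hindep X X' hX hiX hjX hX' hiX' hjX')
end
end
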